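/- arXiv:0906.5007 — 6 statements merged into one kernel-verified Lean document; each statement's English description precedes it below -/
import Mathlib

section
/- Under Assumptions 1–3 on the model, let π̄ be the consensus distribution and let ρ be the minimum normalized cut value (conductance) of the Markov chain with transition matrix T. Then ‖π̄ − (1/n)e‖_∞ ≤ Σ_{i,j} (2 p_ij α_ij / n) · ((1 + log n)/ρ). -/
open Matrix Filter

noncomputable section

/-- the standard basis vector `e_i`. -/
def eVec {n : ℕ} (i : Fin n) : Fin n → ℝ := fun k => if k = i then 1 else 0

/-- `A_{ij} = I − (e_i−e_j)(e_i−e_j)ᵀ/2` : pairwise averaging matrix. -/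
def Amat {n : ℕ} (i j : Fin n) : Matrix (Fin n) (Fin n) ℝ :=
  1 - (2⁻¹ : ℝ) • Matrix.vecMulVec (eVec i - eVec j) (eVec i - eVec j)

/-- `J_{ij} = I − (1−ε) e_i (e_i−e_j)ᵀ` : influence matrix. -/
def Jmat {n : ℕ} (ε : ℝ) (i j : Fin n) : Matrix (Fin n) (Fin n) ℝ :=
  1 - (1 - ε) • Matrix.vecMulVec (eVec i) (eVec i - eVec j)

/-- the social network matrix `T = (1/n) Σ_{i,j} p_ij [(1−γ_ij) A_ij + γ_ij I]`. -/
def socT {n : ℕ} (p γ : Fin n → Fin n → ℝ) : Matrix (Fin n) (Fin n) ℝ :=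
  ((n : ℝ)⁻¹) • ∑ i, ∑ j, p i j •
    ((1 - γ i j) • Amat i j + γ i j • (1 : Matrix (Fin n) (Fin n) ℝ))

/-- the influence matrix `D = (1/n) Σ_{i,j} p_ij α_ij (J_ij − A_ij)`. -/
def infD {n : ℕ} (p α : Fin n → Fin n → ℝ) (ε : ℝ) : Matrix (Fin n) (Fin n) ℝ :=
  ((n : ℝ)⁻¹) • ∑ i, ∑ j, (p i j * α i j) • (Jmat ε i j - Amat i j)

/-- `isPath E i j L` : there is a directed path of length `L` from `i` to `j`. -/
def isPath {n : ℕ} (E : Fin n → Fin n → Prop) (i j : Fin n) (L : ℕ) : Prop :=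
  ∃ f : ℕ → Fin n, f 0 = i ∧ f L = j ∧ ∀ l < L, E (f l) (f (l + 1))

/-!
Put `x = π̄ - e/n`. Stationarity gives `x - xᵀT = π̄ᵀD`, and since `T` is symmetric and doubly
stochastic, `∑_{b ∈ S} (x - xᵀT)_b` is the flow `∑_{i ∈ S, j ∉ S} (x_i - x_j) T_ij` across the
cut `(S, Sᶜ)`. The rank-one shape of each `J_ij - A_ij` bounds this flow by
`B = ∑ p_ij α_ij / (2n)` for every `S`. Sort `x` as `y₀ ≤ ⋯ ≤ y_{n-1}` and let `S` be the top
`n - k` coordinates: the flow is at least `y_k - y_{k-1}` times the cut, which the conductance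
bounds below by `ρ k (n - k) / n`. Hence `y_k - y_{k-1} ≤ (B/ρ) (1/k + 1/(n-k))`, and these gaps
telescope to `max x - min x ≤ 2 (B/ρ) H_{n-1}`; since `∑ x = 0`, this also bounds `‖x‖_∞`.
-/

open Finset

section Cut

variable {ι : Type*} [Fintype ι] [DecidableEq ι]

theorem sum_sub_vecMul_eq_sum_cut {T : Matrix ι ι ℝ} (hT : T.IsSymm) (hcol : 1 ᵥ* T = 1)
    (x : ι → ℝ) (S : Finset ι) :
    ∑ b ∈ S, (x - x ᵥ* T) b = ∑ i ∈ S, ∑ j ∈ Sᶜ, (x i - x j) * T i j := by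
  have hrow : ∀ b, (x - x ᵥ* T) b = ∑ a, (x b - x a) * T b a := by
    intro b
    have hb : ∑ a, T a b = 1 := by simpa [vecMul, dotProduct] using congrFun hcol b
    simp only [Pi.sub_apply, vecMul, dotProduct, sub_mul, sum_sub_distrib, ← mul_sum,
      ← hT.apply b, hb, mul_one]
  have hinner : ∑ i ∈ S, ∑ j ∈ S, (x i - x j) * T i j = 0 := by
    have hswap : ∑ i ∈ S, ∑ j ∈ S, x j * T i j = ∑ i ∈ S, ∑ j ∈ S, x i * T i j := by
      rw [sum_comm]
      exact sum_congr rfl fun i _ => sum_congr rfl fun j _ => by rw [hT.apply]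
    simp only [sub_mul, sum_sub_distrib, hswap, sub_self]
  simp only [hrow, ← sum_add_sum_compl S, sum_add_distrib, hinner, zero_add]

theorem mul_sum_cut_le_sum_cut {T : Matrix ι ι ℝ} (hT : ∀ i j, 0 ≤ T i j) (x : ι → ℝ)
    {S : Finset ι} {s t : ℝ} (hs : ∀ i ∈ S, s ≤ x i) (ht : ∀ j ∈ Sᶜ, x j ≤ t) :
    (s - t) * ∑ i ∈ S, ∑ j ∈ Sᶜ, T i j ≤ ∑ i ∈ S, ∑ j ∈ Sᶜ, (x i - x j) * T i j := by
  simp only [mul_sum]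
  exact sum_le_sum fun i hi => sum_le_sum fun j hj =>
    mul_le_mul_of_nonneg_right (sub_le_sub (hs i hi) (ht j hj)) (hT i j)

end Cut

theorem sub_smul_one_sub_vecMul_eq {ι : Type*} [Fintype ι] {T D : Matrix ι ι ℝ}
    (hcol : 1 ᵥ* T = 1) {π : ι → ℝ} (hπ : π ᵥ* (T + D) = π) (c : ℝ) :
    (π - c • 1) - (π - c • 1) ᵥ* T = π ᵥ* D := by
  rw [vecMul_add] at hπ
  rw [sub_vecMul, smul_vecMul, hcol]
  linear_combination -hπ

theorem norm_le_of_sum_eq_zero_of_sub_le {ι : Type*} [Fintype ι] [Nonempty ι] {x : ι → ℝ}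
    {C : ℝ} (hx : ∑ i, x i = 0) (hC : ∀ i j, x i - x j ≤ C) : ‖x‖ ≤ C := by
  obtain ⟨i₀⟩ := ‹Nonempty ι›
  have hcard : (0 : ℝ) < Fintype.card ι := by exact_mod_cast Fintype.card_pos
  refine (pi_norm_le_iff_of_nonneg (by simpa using hC i₀ i₀)).2 fun i => abs_le.2 ⟨?_, ?_⟩
  · have h := sum_le_sum fun j (_ : j ∈ univ) => hC j i
    simp only [sum_sub_distrib, hx, sum_const, card_univ, nsmul_eq_mul] at h
    nlinarith
  · have h := sum_le_sum fun j (_ : j ∈ univ) => hC i j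
    simp only [sum_sub_distrib, hx, sum_const, card_univ, nsmul_eq_mul] at h
    nlinarith

theorem sum_inv_succ_add_inv_sub_eq_two_mul_harmonic (m : ℕ) :
    ∑ k ∈ range m, (((k + 1 : ℕ) : ℝ)⁻¹ + ((m - k : ℕ) : ℝ)⁻¹) = 2 * harmonic m := by
  have hreflect : ∑ k ∈ range m, ((m - k : ℕ) : ℝ)⁻¹ = ∑ k ∈ range m, ((k + 1 : ℕ) : ℝ)⁻¹ := by
    rw [← sum_range_reflect]
    exact sum_congr rfl fun k hk => by
      rw [show m - (m - 1 - k) = k + 1 by have := mem_range.1 hk; omega]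
  rw [sum_add_distrib, hreflect, harmonic]
  push_cast
  ring

theorem harmonic_pred_le_one_add_log (n : ℕ) : (harmonic (n - 1) : ℝ) ≤ 1 + Real.log n := by
  have hlog := Real.log_natCast_nonneg n
  rcases Nat.lt_or_ge n 2 with hn | hn
  · simp only [show n - 1 = 0 by omega, harmonic_zero, Rat.cast_zero]
    linarith
  have hmono : Real.log (n - 1 : ℕ) ≤ Real.log n :=
    Real.log_le_log (by exact_mod_cast Nat.sub_pos_of_lt hn) (by exact_mod_cast Nat.sub_le n 1)
  linarith [harmonic_le_one_add_log (n - 1)]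

section Coarea

variable {n : ℕ} {T : Matrix (Fin n) (Fin n) ℝ} {ρ B : ℝ}

theorem apply_sort_succ_sub_le (x : Fin n → ℝ) (hT : ∀ i j, 0 ≤ T i j) (hρ : 0 < ρ)
    (hcut : ∀ S : Finset (Fin n), S.Nonempty → S ≠ univ →
      ρ * ((#S : ℝ) * #Sᶜ / n) ≤ ∑ i ∈ S, ∑ j ∈ Sᶜ, T i j)
    (hflow : ∀ S : Finset (Fin n), ∑ i ∈ S, ∑ j ∈ Sᶜ, (x i - x j) * T i j ≤ B)
    (k : ℕ) (hk : k + 1 < n) :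
    x (Tuple.sort x ⟨k + 1, hk⟩) - x (Tuple.sort x ⟨k, by omega⟩) ≤
      B / ρ * (((k + 1 : ℕ) : ℝ)⁻¹ + ((n - (k + 1) : ℕ) : ℝ)⁻¹) := by
  set σ := Tuple.sort x
  have hmono : Monotone (x ∘ σ) := Tuple.monotone_sort x
  set S := (Ici (⟨k + 1, hk⟩ : Fin n)).map σ.toEmbedding
  have hmem : ∀ b, b ∈ S ↔ k + 1 ≤ (σ.symm b : ℕ) := fun b => by
    simp [S, mem_map_equiv, Fin.le_def]
  have hcard : #S = n - (k + 1) := by simp [S]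
  have hcardc : #Sᶜ = k + 1 := by rw [card_compl, Fintype.card_fin, hcard]; omega
  have hS : S.Nonempty := card_pos.1 (by omega)
  have hSc : S ≠ univ := fun h => by simp [h] at hcardc
  have hgap : 0 ≤ x (σ ⟨k + 1, hk⟩) - x (σ ⟨k, by omega⟩) :=
    sub_nonneg.2 (hmono (Fin.mk_le_mk.2 k.le_succ))
  have hlevel := mul_sum_cut_le_sum_cut hT x (S := S) (s := x (σ ⟨k + 1, hk⟩))
    (t := x (σ ⟨k, by omega⟩))
    (fun i hi => by
      simpa using hmono (show (⟨k + 1, hk⟩ : Fin n) ≤ σ.symm i from Fin.le_def.2 ((hmem i).1 hi)))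
    (fun j hj => by
      have := mt (hmem j).2 (mem_compl.1 hj)
      simpa using hmono (show σ.symm j ≤ ⟨k, by omega⟩ from
        Fin.le_def.2 (show (σ.symm j : ℕ) ≤ k by omega)))
  have hB := (mul_le_mul_of_nonneg_left (hcut S hS hSc) hgap).trans (hlevel.trans (hflow S))
  rw [hcard, hcardc] at hB
  have ha : (0 : ℝ) < (n - (k + 1) : ℕ) := by exact_mod_cast Nat.sub_pos_of_lt hk
  have hn : (n : ℝ) = (n - (k + 1) : ℕ) + (k + 1 : ℕ) := by
    exact_mod_cast (Nat.sub_add_cancel hk.le).symm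
  rw [hn] at hB
  calc _ ≤ B / (ρ * (((n - (k + 1) : ℕ) : ℝ) * (k + 1 : ℕ) / ((n - (k + 1) : ℕ) + (k + 1 : ℕ)))) :=
        (le_div_iff₀ (by positivity)).2 hB
    _ = _ := by field_simp

theorem sub_le_two_mul_harmonic (x : Fin n → ℝ) (hT : ∀ i j, 0 ≤ T i j) (hρ : 0 < ρ)
    (hcut : ∀ S : Finset (Fin n), S.Nonempty → S ≠ univ →
      ρ * ((#S : ℝ) * #Sᶜ / n) ≤ ∑ i ∈ S, ∑ j ∈ Sᶜ, T i j)
    (hflow : ∀ S : Finset (Fin n), ∑ i ∈ S, ∑ j ∈ Sᶜ, (x i - x j) * T i j ≤ B)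
    (i j : Fin n) :
    x i - x j ≤ 2 * (B / ρ) * harmonic (n - 1) := by
  obtain ⟨m, rfl⟩ : ∃ m, n = m + 1 := ⟨n - 1, by have := i.pos; omega⟩
  set σ := Tuple.sort x
  have hmono : Monotone (x ∘ σ) := Tuple.monotone_sort x
  set Y : ℕ → ℝ := fun k => x (σ ⟨min k m, by omega⟩)
  have hY : ∀ k (hk : k < m + 1), Y k = x (σ ⟨k, hk⟩) := fun k hk => by
    simp only [Y, min_eq_left (Nat.lt_succ_iff.1 hk)]
  have htop : x i ≤ Y m := by
    simpa [hY m m.lt_succ_self, Fin.last] using hmono (Fin.le_last (σ.symm i))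
  have hbot : Y 0 ≤ x j := by
    simpa [hY 0 m.succ_pos] using hmono (Fin.zero_le (σ.symm j))
  calc x i - x j ≤ Y m - Y 0 := by linarith
    _ = ∑ k ∈ range m, (Y (k + 1) - Y k) := (sum_range_sub Y m).symm
    _ ≤ ∑ k ∈ range m, B / ρ * (((k + 1 : ℕ) : ℝ)⁻¹ + ((m - k : ℕ) : ℝ)⁻¹) :=
        sum_le_sum fun k hk => by
          have hk := mem_range.1 hk
          rw [hY k (by omega), hY (k + 1) (by omega), show m - k = m + 1 - (k + 1) by omega]
          exact apply_sort_succ_sub_le x hT hρ hcut hflow k (by omega)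
    _ = 2 * (B / ρ) * harmonic (m + 1 - 1) := by
        rw [← mul_sum, sum_inv_succ_add_inv_sub_eq_two_mul_harmonic, Nat.add_sub_cancel]
        ring

end Coarea

section Conductance

variable {n : ℕ} {S : Finset (Fin n)}

def cutRatio (T : Matrix (Fin n) (Fin n) ℝ) (S : Finset (Fin n)) : ℝ :=
  (∑ i ∈ S, ∑ j ∈ Sᶜ, (1 / (n : ℝ)) * T i j) / (((#S : ℝ) / n) * ((#Sᶜ : ℝ) / n))

theorem card_mul_card_compl_div_pos (hS : S.Nonempty) (hSc : S ≠ univ) :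
    0 < (#S : ℝ) * #Sᶜ / n := by
  have hSc' : Sᶜ.Nonempty := by
    by_contra! h
    exact hSc (compl_eq_empty_iff S |>.1 h)
  have := hS.card_pos
  have := hSc'.card_pos
  have := hS.choose.pos
  positivity

theorem cutRatio_eq (T : Matrix (Fin n) (Fin n) ℝ) (hS : S.Nonempty) :
    cutRatio T S = (∑ i ∈ S, ∑ j ∈ Sᶜ, T i j) / ((#S : ℝ) * #Sᶜ / n) := by
  have : (n : ℝ) ≠ 0 := by exact_mod_cast hS.choose.pos.ne'
  simp only [cutRatio, ← mul_sum]
  field_simp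

theorem pos_and_mul_le_cut_of_isLeast {T : Matrix (Fin n) (Fin n) ℝ} {ρ : ℝ}
    (hρ : IsLeast {r | ∃ S : Finset (Fin n), S.Nonempty ∧ S ≠ univ ∧ r = cutRatio T S} ρ)
    (hT : ∀ S : Finset (Fin n), S.Nonempty → S ≠ univ → 0 < ∑ i ∈ S, ∑ j ∈ Sᶜ, T i j) :
    0 < ρ ∧ ∀ S : Finset (Fin n), S.Nonempty → S ≠ univ →
      ρ * ((#S : ℝ) * #Sᶜ / n) ≤ ∑ i ∈ S, ∑ j ∈ Sᶜ, T i j := by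
  refine ⟨?_, fun S hS hSc => ?_⟩
  · obtain ⟨S, hS, hSc, rfl⟩ := hρ.1
    rw [cutRatio_eq T hS]
    exact div_pos (hT S hS hSc) (card_mul_card_compl_div_pos hS hSc)
  · have h := hρ.2 ⟨S, hS, hSc, rfl⟩
    rwa [cutRatio_eq T hS, le_div_iff₀ (card_mul_card_compl_div_pos hS hSc)] at h

end Conductance

section Model

variable {n : ℕ}

theorem sum_eVec_apply (i : Fin n) (S : Finset (Fin n)) :
    ∑ b ∈ S, eVec i b = if i ∈ S then 1 else 0 := by
  simp [eVec]

theorem dotProduct_eVec (v : Fin n → ℝ) (i : Fin n) : v ⬝ᵥ eVec i = v i := by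
  simp [eVec, dotProduct]

theorem amat_isSymm (i j : Fin n) : (Amat i j).IsSymm := by
  simp [IsSymm, Amat]

theorem one_vecMul_amat (i j : Fin n) : 1 ᵥ* Amat i j = 1 := by
  simp [Amat, vecMul_sub, vecMul_smul, vecMul_vecMulVec, dotProduct_sub, one_dotProduct, eVec]

theorem amat_apply_nonneg (i j a b : Fin n) : 0 ≤ Amat i j a b := by
  simp only [Amat, eVec, Matrix.sub_apply, Matrix.smul_apply, one_apply, vecMulVec_apply,
    Pi.sub_apply, smul_eq_mul]
  split_ifs <;> simp_all <;> norm_num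

theorem amat_apply_of_ne {i j : Fin n} (h : i ≠ j) : Amat i j i j = 2⁻¹ := by
  simp [Amat, eVec, one_apply, vecMulVec_apply, h, h.symm]

theorem socT_apply (p γ : Fin n → Fin n → ℝ) (a b : Fin n) :
    socT p γ a b = (n : ℝ)⁻¹ * ∑ i, ∑ j, p i j *
      ((1 - γ i j) * Amat i j a b + γ i j * (1 : Matrix (Fin n) (Fin n) ℝ) a b) := by
  simp [socT, Matrix.sum_apply, mul_add]

theorem socT_isSymm (p γ : Fin n → Fin n → ℝ) : (socT p γ).IsSymm := by
  simp only [IsSymm, socT, transpose_smul, transpose_sum, transpose_add, transpose_one,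
    (amat_isSymm _ _).eq]

theorem one_vecMul_socT {p : Fin n → Fin n → ℝ} (γ : Fin n → Fin n → ℝ)
    (hp : ∀ i, ∑ j, p i j = 1) : 1 ᵥ* socT p γ = 1 := by
  obtain rfl | hn := eq_or_ne n 0
  · exact Subsingleton.elim _ _
  simp only [socT, vecMul_smul, vecMul_sum, vecMul_add, one_vecMul_amat, vecMul_one,
    ← add_smul, sub_add_cancel, one_smul, ← sum_smul, hp, sum_const, card_univ,
    Fintype.card_fin]
  rw [← Nat.cast_smul_eq_nsmul ℝ, smul_smul, inv_mul_cancel₀ (by exact_mod_cast hn), one_smul]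

theorem socT_apply_nonneg {p γ : Fin n → Fin n → ℝ} (hp : ∀ i j, 0 ≤ p i j)
    (hγ : ∀ i j, 0 ≤ γ i j) (hγ1 : ∀ i j, γ i j ≤ 1) (a b : Fin n) : 0 ≤ socT p γ a b := by
  rw [socT_apply]
  have h1 : (0 : ℝ) ≤ (1 : Matrix (Fin n) (Fin n) ℝ) a b := by
    rw [one_apply]; split_ifs <;> norm_num
  exact mul_nonneg (by positivity) <| sum_nonneg fun i _ => sum_nonneg fun j _ =>
    mul_nonneg (hp i j) <| add_nonneg
      (mul_nonneg (sub_nonneg.2 (hγ1 i j)) (amat_apply_nonneg i j a b)) (mul_nonneg (hγ i j) h1)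

theorem socT_apply_pos {p γ : Fin n → Fin n → ℝ} (hp : ∀ i j, 0 ≤ p i j)
    (hγ1 : ∀ i j, γ i j ≤ 1) {a b : Fin n} (hab : a ≠ b)
    (hpab : 0 < p a b) (hγab : γ a b < 1) : 0 < socT p γ a b := by
  rw [socT_apply]
  have hterm : ∀ i j, 0 ≤ p i j *
      ((1 - γ i j) * Amat i j a b + γ i j * (1 : Matrix (Fin n) (Fin n) ℝ) a b) := fun i j => by
    simp only [one_apply_ne hab, mul_zero, add_zero]
    exact mul_nonneg (hp i j) (mul_nonneg (sub_nonneg.2 (hγ1 i j)) (amat_apply_nonneg i j a b))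
  have hab_term : 0 < p a b *
      ((1 - γ a b) * Amat a b a b + γ a b * (1 : Matrix (Fin n) (Fin n) ℝ) a b) := by
    rw [amat_apply_of_ne hab, one_apply_ne hab, mul_zero, add_zero]
    have : 0 < 1 - γ a b := sub_pos.2 hγab
    positivity
  have := a.pos
  exact mul_pos (by positivity) <| sum_pos' (fun i _ => sum_nonneg fun j _ => hterm i j)
    ⟨a, mem_univ a, sum_pos' (fun j _ => hterm a j) ⟨b, mem_univ b, hab_term⟩⟩

theorem exists_edge_of_isPath {E : Fin n → Fin n → Prop} {S : Finset (Fin n)} {i j : Fin n}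
    {L : ℕ} (h : isPath E i j L) (hi : i ∈ S) (hj : j ∉ S) : ∃ a ∈ S, ∃ b ∉ S, E a b := by
  obtain ⟨f, rfl, rfl, hf⟩ := h
  by_contra! hS
  have hmem : ∀ l ≤ L, f l ∈ S := by
    intro l
    induction l with
    | zero => exact fun _ => hi
    | succ l ih =>
      intro hl
      by_contra hl'
      exact hS _ (ih (by omega)) _ hl' (hf l (by omega))
  exact hj (hmem L le_rfl)

theorem socT_cut_pos {p γ : Fin n → Fin n → ℝ} (hp : ∀ i j, 0 ≤ p i j)
    (hγ : ∀ i j, 0 ≤ γ i j) (hγ1 : ∀ i j, γ i j ≤ 1) (hedge : ∀ i j, 0 < p i j → γ i j < 1)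
    (hconn : ∀ i j : Fin n, ∃ L, isPath (fun a b => 0 < p a b) i j L)
    {S : Finset (Fin n)} (hS : S.Nonempty) (hSc : S ≠ univ) :
    0 < ∑ i ∈ S, ∑ j ∈ Sᶜ, socT p γ i j := by
  obtain ⟨i, hi⟩ := hS
  obtain ⟨j, hj⟩ : ∃ j, j ∉ S := by
    by_contra! h
    exact hSc (eq_univ_iff_forall.2 h)
  obtain ⟨L, hL⟩ := hconn i j
  obtain ⟨a, ha, b, hb, hpab⟩ := exists_edge_of_isPath hL hi hj
  have hab : a ≠ b := ne_of_mem_of_not_mem ha hb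
  have hT := socT_apply_nonneg hp hγ hγ1
  exact sum_pos' (fun i _ => sum_nonneg fun j _ => hT i j) ⟨a, ha,
    sum_pos' (fun j _ => hT a j)
      ⟨b, mem_compl.2 hb, socT_apply_pos hp hγ1 hab hpab (hedge a b hpab)⟩⟩

theorem jmat_sub_amat (ε : ℝ) (i j : Fin n) :
    Jmat ε i j - Amat i j =
      vecMulVec ((ε - 2⁻¹) • eVec i - (2⁻¹ : ℝ) • eVec j) (eVec i - eVec j) := by
  ext a b
  simp only [Jmat, Amat, Matrix.sub_apply, Matrix.smul_apply, vecMulVec_apply, Pi.sub_apply,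
    Pi.smul_apply, smul_eq_mul]
  ring

theorem vecMul_infD (p α : Fin n → Fin n → ℝ) (ε : ℝ) (v : Fin n → ℝ) :
    v ᵥ* infD p α ε = (n : ℝ)⁻¹ • ∑ i, ∑ j,
      (p i j * α i j * ((ε - 2⁻¹) * v i - 2⁻¹ * v j)) • (eVec i - eVec j) := by
  simp only [infD, vecMul_smul, vecMul_sum, jmat_sub_amat, vecMul_vecMulVec, dotProduct_sub,
    dotProduct_smul, dotProduct_eVec, smul_eq_mul, smul_smul]

theorem influence_mul_indicator_le {ε : ℝ} (hε0 : 0 < ε) (hε : ε ≤ 1 / 2) {π : Fin n → ℝ}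
    (hπ : ∀ i, 0 ≤ π i) (hπ1 : ∑ i, π i = 1) (S : Finset (Fin n)) (i j : Fin n) :
    ((ε - 2⁻¹) * π i - 2⁻¹ * π j) * ((if i ∈ S then 1 else 0) - if j ∈ S then 1 else 0) ≤ 2⁻¹ := by
  obtain rfl | hij := eq_or_ne i j
  · simp
  have hpair : π i + π j ≤ 1 := by
    rw [← sum_pair hij, ← hπ1]
    exact sum_le_sum_of_subset_of_nonneg (subset_univ _) fun k _ _ => hπ k
  have := hπ i
  have := hπ j
  split_ifs <;> nlinarith

theorem sum_vecMul_infD_le {p α : Fin n → Fin n → ℝ} (hp : ∀ i j, 0 ≤ p i j)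
    (hα : ∀ i j, 0 ≤ α i j) {ε : ℝ} (hε0 : 0 < ε) (hε : ε ≤ 1 / 2) {π : Fin n → ℝ}
    (hπ : ∀ i, 0 ≤ π i) (hπ1 : ∑ i, π i = 1) (S : Finset (Fin n)) :
    ∑ b ∈ S, (π ᵥ* infD p α ε) b ≤ (∑ i, ∑ j, p i j * α i j) / (2 * n) := by
  calc ∑ b ∈ S, (π ᵥ* infD p α ε) b
      = (n : ℝ)⁻¹ * ∑ i, ∑ j, p i j * α i j * (((ε - 2⁻¹) * π i - 2⁻¹ * π j) *
          ((if i ∈ S then 1 else 0) - if j ∈ S then 1 else 0)) := by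
        simp only [vecMul_infD, Pi.smul_apply, Finset.sum_apply, Pi.sub_apply, smul_eq_mul,
          ← mul_sum]
        congr 1
        rw [sum_comm]
        refine sum_congr rfl fun i _ => ?_
        rw [sum_comm]
        refine sum_congr rfl fun j _ => ?_
        rw [← mul_sum, sum_sub_distrib, sum_eVec_apply, sum_eVec_apply, mul_assoc]
    _ ≤ (n : ℝ)⁻¹ * ∑ i, ∑ j, p i j * α i j * 2⁻¹ := by
        gcongr with i _ j _
        · exact mul_nonneg (hp i j) (hα i j)
        · exact influence_mul_indicator_le hε0 hε hπ hπ1 S i j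
    _ = (∑ i, ∑ j, p i j * α i j) / (2 * n) := by
        simp only [← sum_mul]
        ring

end Model

theorem stmt_12_general {n : ℕ} (hn : 2 ≤ n)
    (p α β γ : Fin n → Fin n → ℝ)
    (hp_nonneg : ∀ i j, 0 ≤ p i j) (hp_row : ∀ i, ∑ j, p i j = 1)
    (hconn : ∀ i j : Fin n, ∃ L, isPath (fun a b => 0 < p a b) i j L)
    (hα : ∀ i j, 0 ≤ α i j) (hβ : ∀ i j, 0 ≤ β i j) (hγ : ∀ i j, 0 ≤ γ i j)
    (habg : ∀ i j, α i j + β i j + γ i j = 1)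
    (hint : ∀ i j, 0 < p i j → 0 < β i j + α i j)
    (ε : ℝ) (hε0 : 0 < ε) (hε : ε ≤ 1 / 2)
    -- π̄ : the consensus distribution
    (πbar : Fin n → ℝ) (hπ_nonneg : ∀ i, 0 ≤ πbar i) (hπ_sum : ∑ i, πbar i = 1)
    (hπ_stat : Matrix.vecMul πbar (socT p γ + infD p α ε) = πbar)
    -- ρ : the minimum normalized cut value (conductance) of the chain T
    (ρ : ℝ)
    (hρ : IsLeast {r : ℝ | ∃ S : Finset (Fin n), S.Nonempty ∧ S ≠ Finset.univ ∧
      r = (∑ i ∈ S, ∑ j ∈ Sᶜ, (1 / (n : ℝ)) * socT p γ i j) /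
        (((S.card : ℝ) / n) * ((Sᶜ.card : ℝ) / n))} ρ) :
    ‖(fun k => πbar k - 1 / n : Fin n → ℝ)‖ ≤
      (∑ i, ∑ j, 2 * p i j * α i j / n) * ((1 + Real.log n) / ρ) := by
  have hγ1 : ∀ i j, γ i j ≤ 1 := fun i j => by linarith [habg i j, hα i j, hβ i j]
  have hedge : ∀ i j, 0 < p i j → γ i j < 1 := fun i j h => by linarith [habg i j, hint i j h]
  have hT := socT_apply_nonneg hp_nonneg hγ hγ1
  have hcol := one_vecMul_socT γ hp_row
  have : NeZero n := ⟨by omega⟩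
  set x : Fin n → ℝ := fun k => πbar k - 1 / n
  have hx : x = πbar - (1 / n : ℝ) • 1 := by
    ext k
    simp [x]
  set B := (∑ i, ∑ j, p i j * α i j) / (2 * n)
  have hflow : ∀ S : Finset (Fin n), ∑ i ∈ S, ∑ j ∈ Sᶜ, (x i - x j) * socT p γ i j ≤ B :=
    fun S => by
      rw [← sum_sub_vecMul_eq_sum_cut (socT_isSymm p γ) hcol, hx,
        sub_smul_one_sub_vecMul_eq hcol hπ_stat]
      exact sum_vecMul_infD_le hp_nonneg hα hε0 hε hπ_nonneg hπ_sum S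
  obtain ⟨hρpos, hcut⟩ := pos_and_mul_le_cut_of_isLeast hρ fun S hS hSc =>
    socT_cut_pos hp_nonneg hγ hγ1 hedge hconn hS hSc
  have hx_sum : ∑ i, x i = 0 := by
    have : (n : ℝ) ≠ 0 := by positivity
    simp [x, sum_sub_distrib, hπ_sum, this]
  have hrhs : ∑ i, ∑ j, 2 * p i j * α i j / n = 4 * B := by
    simp only [B, mul_sum, sum_div]
    exact sum_congr rfl fun i _ => sum_congr rfl fun j _ => by ring
  have hB : 0 ≤ B := div_nonneg
    (sum_nonneg fun i _ => sum_nonneg fun j _ => mul_nonneg (hp_nonneg i j) (hα i j))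
    (by positivity)
  have hlog := Real.log_natCast_nonneg n
  calc ‖x‖ ≤ 2 * (B / ρ) * harmonic (n - 1) :=
        norm_le_of_sum_eq_zero_of_sub_le hx_sum (sub_le_two_mul_harmonic x hT hρpos hcut hflow)
    _ ≤ 2 * (B / ρ) * (1 + Real.log n) :=
        mul_le_mul_of_nonneg_left (harmonic_pred_le_one_add_log n) (by positivity)
    _ ≤ (∑ i, ∑ j, 2 * p i j * α i j / n) * ((1 + Real.log n) / ρ) := by
        rw [hrhs]
        have : 0 ≤ B / ρ * (1 + Real.log n) := by positivity
        linarith [show 4 * B * ((1 + Real.log n) / ρ) = 4 * (B / ρ * (1 + Real.log n)) by ring]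

/-- Theorem 9: under Assumptions 1–3, the consensus distribution `π̄` satisfies
`‖π̄ − (1/n)e‖_∞ ≤ Σ_{i,j} (2 p_ij α_ij / n) · ((1 + log n)/ρ)`, where `ρ` is the
minimum normalized cut value (conductance) of the Markov chain with transition
matrix `T` (whose stationary distribution is uniform). -/
theorem stmt_12 {n : ℕ} (hn : 2 ≤ n)
    (p α β γ : Fin n → Fin n → ℝ)
    (hp_diag : ∀ i, p i i = 0) (hp_nonneg : ∀ i j, 0 ≤ p i j) (hp_row : ∀ i, ∑ j, p i j = 1)
    (hconn : ∀ i j : Fin n, ∃ L, isPath (fun a b => 0 < p a b) i j L)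
    (hα : ∀ i j, 0 ≤ α i j) (hβ : ∀ i j, 0 ≤ β i j) (hγ : ∀ i j, 0 ≤ γ i j)
    (habg : ∀ i j, α i j + β i j + γ i j = 1)
    (hint : ∀ i j, 0 < p i j → 0 < β i j + α i j)
    (ε : ℝ) (hε0 : 0 < ε) (hε : ε ≤ 1 / 2)
    -- π̄ : the consensus distribution
    (πbar : Fin n → ℝ) (hπ_nonneg : ∀ i, 0 ≤ πbar i) (hπ_sum : ∑ i, πbar i = 1)
    (hπ_stat : Matrix.vecMul πbar (socT p γ + infD p α ε) = πbar)
    -- ρ : the minimum normalized cut value (conductance) of the chain T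
    (ρ : ℝ)
    (hρ : IsLeast {r : ℝ | ∃ S : Finset (Fin n), S.Nonempty ∧ S ≠ Finset.univ ∧
      r = (∑ i ∈ S, ∑ j ∈ Sᶜ, (1 / (n : ℝ)) * socT p γ i j) /
        (((S.card : ℝ) / n) * ((Sᶜ.card : ℝ) / n))} ρ) :
    ‖(fun k => πbar k - 1 / n : Fin n → ℝ)‖ ≤
      (∑ i, ∑ j, 2 * p i j * α i j / n) * ((1 + Real.log n) / ρ) :=
  stmt_12_general hn p α β γ hp_nonneg hp_row hconn hα hβ hγ habg hint ε hε0 hε πbar hπ_nonneg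
    hπ_sum hπ_stat ρ hρ
end
end

section
/- Let T be a symmetric doubly stochastic primitive n×n matrix, and consider the Markov chain with transition matrix T. For distinct states a, b, let c_ab be the minimum relative cut value between a and b in the weighted undirected graph on {1,…,n} with edge weights T_ij. Then the mean commute time satisfies n/c_ab ≤ m_ab + m_ba ≤ n²/c_ab. -/
open Matrix

noncomputable section

/-- the fundamental matrix `Y = Σ_{k=0}^∞ (T^k − T^∞)` of a doubly stochastic
Markov chain, whose limit matrix `T^∞` has all entries `1/n`. -/
def fundY {n : ℕ} (T : Matrix (Fin n) (Fin n) ℝ) : Matrix (Fin n) (Fin n) ℝ :=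
  Matrix.of fun i j => ∑' k : ℕ, ((T ^ k) i j - 1 / n)

/-- the mean first passage time `m_ij = n (Y_jj − Y_ij)` from state `i` to
state `j` of a doubly stochastic Markov chain with transition matrix `T`. -/
def mfp {n : ℕ} (T : Matrix (Fin n) (Fin n) ℝ) (i j : Fin n) : ℝ :=
  n * (fundY T j j - fundY T i j)

namespace Stmt13
open Finset

lemma pow_nonneg' (T : Matrix (Fin n) (Fin n) ℝ) (hnonneg : ∀ i j, 0 ≤ T i j) :
    ∀ k i j, 0 ≤ (T ^ k) i j := by
  intro k
  induction k with
  | zero => intro i j; simp [Matrix.one_apply]; positivity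
  | succ k ih =>
      intro i j
      rw [pow_succ, Matrix.mul_apply]
      exact Finset.sum_nonneg fun l _ => mul_nonneg (ih i l) (hnonneg l j)

lemma pow_row_sum (T : Matrix (Fin n) (Fin n) ℝ) (hrow : ∀ i, ∑ j, T i j = 1) :
    ∀ k i, ∑ j, (T ^ k) i j = 1 := by
  intro k
  induction k with
  | zero => intro i; simp [Matrix.one_apply]
  | succ k ih =>
      intro i
      simp only [pow_succ, Matrix.mul_apply]
      rw [Finset.sum_comm]
      have : ∀ l, ∑ j, (T ^ k) i l * T l j = (T ^ k) i l := by
        intro l; rw [← Finset.mul_sum, hrow, mul_one]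
      simp_rw [this]
      exact ih i

/-- Doeblin contraction: entrywise lower bound ε gives oscillation contraction. -/
lemma doeblin (hn : (Finset.univ : Finset (Fin n)).Nonempty)
    (P : Matrix (Fin n) (Fin n) ℝ) (ε : ℝ)
    (hP : ∀ i j, ε ≤ P i j) (hrowP : ∀ i, ∑ j, P i j = 1) (x : Fin n → ℝ) :
    Finset.univ.sup' hn (P.mulVec x) - Finset.univ.inf' hn (P.mulVec x)
      ≤ (1 - n * ε) * (Finset.univ.sup' hn x - Finset.univ.inf' hn x) := by
  obtain ⟨i, -, hi⟩ := Finset.exists_mem_eq_sup' hn (P.mulVec x)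
  obtain ⟨i', -, hi'⟩ := Finset.exists_mem_eq_inf' hn (P.mulVec x)
  rw [hi, hi']
  set M := Finset.univ.sup' hn x with hM
  set m := Finset.univ.inf' hn x with hm
  have hxM : ∀ l, x l ≤ M := fun l => Finset.le_sup' x (Finset.mem_univ l)
  have hxm : ∀ l, m ≤ x l := fun l => Finset.inf'_le x (Finset.mem_univ l)
  have hmM : m ≤ M := le_trans (hxm hn.choose) (hxM _)
  set μ : Fin n → ℝ := fun l => min (P i l) (P i' l) with hμ
  have hs : (n : ℝ) * ε ≤ ∑ l, μ l := by
    calc (n : ℝ) * ε = ∑ _l : Fin n, ε := by simp [mul_comm]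
    _ ≤ ∑ l, μ l := Finset.sum_le_sum fun l _ => le_min (hP i l) (hP i' l)
  have key : P.mulVec x i - P.mulVec x i' =
      (∑ l, (P i l - μ l) * x l) - (∑ l, (P i' l - μ l) * x l) := by
    simp [Matrix.mulVec, dotProduct, sub_mul, Finset.sum_sub_distrib]
  rw [key]
  have h1 : ∑ l, (P i l - μ l) * x l ≤ (1 - ∑ l, μ l) * M := by
    have : ∑ l, (P i l - μ l) * x l ≤ ∑ l, (P i l - μ l) * M :=
      Finset.sum_le_sum fun l _ => mul_le_mul_of_nonneg_left (hxM l)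
        (by simp [hμ, sub_nonneg, min_le_left])
    calc ∑ l, (P i l - μ l) * x l ≤ ∑ l, (P i l - μ l) * M := this
    _ = (1 - ∑ l, μ l) * M := by
        rw [← Finset.sum_mul]; congr 1; rw [Finset.sum_sub_distrib, hrowP]
  have h2 : (1 - ∑ l, μ l) * m ≤ ∑ l, (P i' l - μ l) * x l := by
    have : ∑ l, (P i' l - μ l) * m ≤ ∑ l, (P i' l - μ l) * x l :=
      Finset.sum_le_sum fun l _ => mul_le_mul_of_nonneg_left (hxm l)
        (by simp [hμ, sub_nonneg, min_le_right])
    calc (1 - ∑ l, μ l) * m = ∑ l, (P i' l - μ l) * m := by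
          rw [← Finset.sum_mul]; congr 1; rw [Finset.sum_sub_distrib, hrowP]
    _ ≤ _ := this
  have hμ1 : ∑ l, μ l ≤ 1 := by
    rw [← hrowP i]; exact Finset.sum_le_sum fun l _ => min_le_left _ _
  calc (∑ l, (P i l - μ l) * x l) - (∑ l, (P i' l - μ l) * x l)
      ≤ (1 - ∑ l, μ l) * M - (1 - ∑ l, μ l) * m := sub_le_sub h1 h2
  _ = (1 - ∑ l, μ l) * (M - m) := by ring
  _ ≤ (1 - n * ε) * (M - m) := by
      apply mul_le_mul_of_nonneg_right _ (sub_nonneg.2 hmM)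
      linarith


lemma summable_pow_div (r : ℝ) (h0 : 0 ≤ r) (h1 : r < 1) (m : ℕ) (hm : 0 < m) :
    Summable (fun k : ℕ => r ^ (k / m)) := by
  apply summable_of_sum_range_le (c := m * (1 - r)⁻¹) (fun k => pow_nonneg h0 _)
  intro K
  have hinj : Set.InjOn (fun k : ℕ => (k / m, k % m)) (range K) := by
    intro x _ y _ h
    have h1 : x / m = y / m := by simpa using congrArg Prod.fst h
    have h2 : x % m = y % m := by simpa using congrArg Prod.snd h
    calc x = m * (x / m) + x % m := (Nat.div_add_mod x m).symm
      _ = m * (y / m) + y % m := by rw [h1, h2]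
      _ = y := Nat.div_add_mod y m
  have h1' : ∑ k ∈ range K, r ^ (k / m)
      = ∑ p ∈ (range K).image (fun k => (k / m, k % m)), r ^ p.1 := by
    rw [Finset.sum_image]
    intro x hx y hy h; exact hinj hx hy h
  rw [h1']
  have hsub : (range K).image (fun k => (k / m, k % m)) ⊆ range K ×ˢ range m := by
    intro p hp
    simp only [Finset.mem_image, Finset.mem_range] at hp
    obtain ⟨k, hk, rfl⟩ := hp
    simp only [Finset.mem_product, Finset.mem_range]
    exact ⟨lt_of_le_of_lt (Nat.div_le_self k m) hk, Nat.mod_lt k hm⟩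
  calc ∑ p ∈ (range K).image (fun k => (k / m, k % m)), r ^ p.1
      ≤ ∑ p ∈ range K ×ˢ range m, r ^ p.1 :=
        Finset.sum_le_sum_of_subset_of_nonneg hsub (fun p _ _ => pow_nonneg h0 _)
    _ = ∑ q ∈ range K, ∑ _s ∈ range m, r ^ q := by
        rw [Finset.sum_product]
    _ = m * ∑ q ∈ range K, r ^ q := by
        rw [Finset.mul_sum]
        exact Finset.sum_congr rfl fun q _ => by
          rw [Finset.sum_const, nsmul_eq_mul, Finset.card_range]
    _ ≤ m * (1 - r)⁻¹ := by
        apply mul_le_mul_of_nonneg_left _ (by positivity)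
        calc ∑ q ∈ range K, r ^ q ≤ ∑' q : ℕ, r ^ q :=
              Summable.sum_le_tsum (range K) (fun q _ => pow_nonneg h0 q)
                (summable_geometric_of_lt_one h0 h1)
          _ = (1 - r)⁻¹ := tsum_geometric_of_lt_one h0 h1


lemma pow_symm {n : ℕ} (T : Matrix (Fin n) (Fin n) ℝ) (hsym : ∀ i j, T i j = T j i) :
    ∀ k i j, (T ^ k) i j = (T ^ k) j i := by
  have hT : Tᵀ = T := Matrix.ext fun i j => hsym j i
  intro k i j
  have : (T ^ k)ᵀ = T ^ k := by rw [Matrix.transpose_pow, hT]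
  exact (congrFun (congrFun this j) i).symm ▸ rfl

lemma pow_col_sum {n : ℕ} (T : Matrix (Fin n) (Fin n) ℝ) (hsym : ∀ i j, T i j = T j i)
    (hrow : ∀ i, ∑ j, T i j = 1) : ∀ k j, ∑ i, (T ^ k) i j = 1 := by
  intro k j
  have : ∀ i, (T ^ k) i j = (T ^ k) j i := fun i => pow_symm T hsym k i j
  simp_rw [this]
  exact pow_row_sum T hrow k j

lemma key_summable {n : ℕ} (hn : 0 < n) (T : Matrix (Fin n) (Fin n) ℝ)
    (hsym : ∀ i j, T i j = T j i) (hnonneg : ∀ i j, 0 ≤ T i j)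
    (hrow : ∀ i, ∑ j, T i j = 1)
    (hprim : ∃ k : ℕ, 0 < k ∧ ∀ a b, 0 < (T ^ k) a b) (i j : Fin n) :
    Summable fun k : ℕ => (T ^ k) i j - 1 / n := by
  have hne : (Finset.univ : Finset (Fin n)).Nonempty := ⟨⟨0, hn⟩, Finset.mem_univ _⟩
  obtain ⟨m, hm, hpos⟩ := hprim
  set ε : ℝ := Finset.univ.inf' hne (fun i' => Finset.univ.inf' hne (fun j' => (T ^ m) i' j'))
    with hεdef
  have hεle : ∀ i' j', ε ≤ (T ^ m) i' j' := fun i' j' =>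
    le_trans (Finset.inf'_le _ (Finset.mem_univ i'))
      (Finset.inf'_le _ (Finset.mem_univ j'))
  have hεpos : 0 < ε := by
    rw [hεdef, Finset.lt_inf'_iff]
    intro i' _
    rw [Finset.lt_inf'_iff]
    intro j' _
    exact hpos i' j'
  set r : ℝ := 1 - n * ε with hrdef
  have h0r : 0 ≤ r := by
    have : (n : ℝ) * ε ≤ 1 := by
      calc (n : ℝ) * ε = ∑ _j' : Fin n, ε := by simp [mul_comm]
        _ ≤ ∑ j', (T ^ m) ⟨0, hn⟩ j' := Finset.sum_le_sum fun j' _ => hεle _ j'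
        _ = 1 := pow_row_sum T hrow m _
    simp [hrdef]; linarith
  have h1r : r < 1 := by
    have : 0 < (n : ℝ) * ε := by positivity
    simp [hrdef]; linarith
  set D : ℕ → ℝ := fun k =>
    Finset.univ.sup' hne (fun i' => (T ^ k) i' j)
      - Finset.univ.inf' hne (fun i' => (T ^ k) i' j) with hDdef
  have hmv : ∀ p k, (T ^ p).mulVec (fun l => (T ^ k) l j) = fun i' => (T ^ (p + k)) i' j := by
    intro p k
    funext i'
    simp [Matrix.mulVec, dotProduct, pow_add, Matrix.mul_apply]
  have hstep : ∀ p k, D (p + k) ≤ D k := by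
    intro p k
    have h := doeblin hne (T ^ p) 0 (fun i' j' => pow_nonneg' T hnonneg p i' j')
      (pow_row_sum T hrow p) (fun l => (T ^ k) l j)
    rw [hmv p k] at h
    calc D (p + k) ≤ (1 - (n : ℝ) * 0) * D k := h
      _ = D k := by ring
  have hcontr : ∀ k, D (m + k) ≤ r * D k := by
    intro k
    have h := doeblin hne (T ^ m) ε (fun i' j' => hεle i' j')
      (pow_row_sum T hrow m) (fun l => (T ^ k) l j)
    rw [hmv m k] at h
    exact h
  have hD0 : ∀ k, 0 ≤ D k := by
    intro k
    have h1 : Finset.univ.inf' hne (fun i' => (T ^ k) i' j) ≤ (T ^ k) ⟨0, hn⟩ j :=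
      Finset.inf'_le _ (Finset.mem_univ _)
    have h2 : (T ^ k) ⟨0, hn⟩ j ≤ Finset.univ.sup' hne (fun i' => (T ^ k) i' j) :=
      Finset.le_sup' (fun i' => (T ^ k) i' j) (Finset.mem_univ _)
    simp only [hDdef]; linarith
  have hgeom : ∀ q, D (m * q) ≤ r ^ q * D 0 := by
    intro q
    induction q with
    | zero => simp
    | succ q ih =>
        have h1 : m * (q + 1) = m + m * q := by ring
        calc D (m * (q + 1)) = D (m + m * q) := by rw [h1]
          _ ≤ r * D (m * q) := hcontr _
          _ ≤ r * (r ^ q * D 0) := mul_le_mul_of_nonneg_left ih h0r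
          _ = r ^ (q + 1) * D 0 := by ring
  have hDk : ∀ k, D k ≤ r ^ (k / m) * D 0 := by
    intro k
    calc D k = D (k % m + m * (k / m)) := by rw [Nat.mod_add_div]
      _ ≤ D (m * (k / m)) := hstep _ _
      _ ≤ r ^ (k / m) * D 0 := hgeom _
  have hmid : ∀ k, |(T ^ k) i j - 1 / n| ≤ D k := by
    intro k
    have hsup : (1 : ℝ) / n ≤ Finset.univ.sup' hne (fun i' => (T ^ k) i' j) := by
      rw [div_le_iff₀ (by exact_mod_cast hn)]
      calc (1 : ℝ) = ∑ i', (T ^ k) i' j := (pow_col_sum T hsym hrow k j).symm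
        _ ≤ ∑ _i' : Fin n, Finset.univ.sup' hne (fun i' => (T ^ k) i' j) :=
            Finset.sum_le_sum fun i' _ =>
              Finset.le_sup' (fun i' => (T ^ k) i' j) (Finset.mem_univ i')
        _ = _ := by simp [mul_comm]
    have hinf : Finset.univ.inf' hne (fun i' => (T ^ k) i' j) ≤ 1 / n := by
      rw [le_div_iff₀ (by exact_mod_cast hn)]
      calc Finset.univ.inf' hne (fun i' => (T ^ k) i' j) * n
          = ∑ _i' : Fin n, Finset.univ.inf' hne (fun i' => (T ^ k) i' j) := by simp [mul_comm]
        _ ≤ ∑ i', (T ^ k) i' j := Finset.sum_le_sum fun i' _ => Finset.inf'_le _ (Finset.mem_univ i')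
        _ = 1 := pow_col_sum T hsym hrow k j
    have h1 : (T ^ k) i j ≤ Finset.univ.sup' hne (fun i' => (T ^ k) i' j) :=
      Finset.le_sup' (fun i' => (T ^ k) i' j) (Finset.mem_univ i)
    have h2 : Finset.univ.inf' hne (fun i' => (T ^ k) i' j) ≤ (T ^ k) i j :=
      Finset.inf'_le _ (Finset.mem_univ i)
    simp only [hDdef]
    rw [abs_le]
    constructor <;> linarith
  apply Summable.of_norm_bounded (g := fun k => D 0 * r ^ (k / m))
    ((summable_pow_div r h0r h1r m hm).mul_left (D 0))
  intro k
  calc ‖(T ^ k) i j - 1 / n‖ = |(T ^ k) i j - 1 / n| := Real.norm_eq_abs _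
    _ ≤ D k := hmid k
    _ ≤ r ^ (k / m) * D 0 := hDk k
    _ = D 0 * r ^ (k / m) := mul_comm _ _


/-- `Y - T Y = I - J` columnwise -/
lemma harmonic {n : ℕ} (hn : 0 < n) (T : Matrix (Fin n) (Fin n) ℝ)
    (hsym : ∀ i j, T i j = T j i) (hnonneg : ∀ i j, 0 ≤ T i j)
    (hrow : ∀ i, ∑ j, T i j = 1)
    (hprim : ∃ k : ℕ, 0 < k ∧ ∀ a b, 0 < (T ^ k) a b) (i j : Fin n) :
    fundY T i j - ∑ l, T i l * fundY T l j
      = (if i = j then 1 else 0) - 1 / n := by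
  have hsum : ∀ i', Summable fun k : ℕ => (T ^ k) i' j - 1 / n :=
    fun i' => key_summable hn T hsym hnonneg hrow hprim i' j
  have step1 : ∑ l, T i l * fundY T l j
      = ∑' k : ℕ, ∑ l, T i l * ((T ^ k) l j - 1 / n) := by
    have : ∀ l, T i l * fundY T l j = ∑' k : ℕ, T i l * ((T ^ k) l j - 1 / n) := by
      intro l
      exact ((hsum l).tsum_mul_left (T i l)).symm
    simp_rw [this]
    exact (Summable.tsum_finsetSum (fun l _ => ((hsum l).mul_left (T i l)))).symm
  have step2 : ∀ k : ℕ, ∑ l, T i l * ((T ^ k) l j - 1 / n)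
      = (T ^ (k + 1)) i j - 1 / n := by
    intro k
    have h1 : ∑ l, T i l * (T ^ k) l j = (T ^ (k + 1)) i j := by
      rw [pow_succ']
      rw [Matrix.mul_apply]
    calc ∑ l, T i l * ((T ^ k) l j - 1 / n)
        = ∑ l, (T i l * (T ^ k) l j - T i l * (1 / n)) := by
          exact Finset.sum_congr rfl fun l _ => by ring
      _ = (∑ l, T i l * (T ^ k) l j) - (∑ l, T i l) * (1 / n) := by
          rw [Finset.sum_sub_distrib, Finset.sum_mul]
      _ = (T ^ (k + 1)) i j - 1 / n := by rw [h1, hrow i, one_mul]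
  have step3 : ∑' k : ℕ, ((T ^ (k + 1)) i j - 1 / n)
      = fundY T i j - ((T ^ 0) i j - 1 / n) := by
    have h := Summable.tsum_eq_zero_add (hsum i)
    have : fundY T i j = ((T ^ 0) i j - 1 / n)
        + ∑' k : ℕ, ((T ^ (k + 1)) i j - 1 / n) := h
    linarith
  rw [step1]
  simp_rw [step2]
  rw [step3]
  have h0 : (T ^ 0) i j = if i = j then 1 else 0 := by
    rw [pow_zero, Matrix.one_apply]
  rw [h0]
  ring

/-- flow through a cut -/
lemma flow_identity {n : ℕ} (T : Matrix (Fin n) (Fin n) ℝ)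
    (hsym : ∀ i j, T i j = T j i) (hrow : ∀ i, ∑ j, T i j = 1)
    (v q : Fin n → ℝ) (hv : ∀ i, v i - ∑ l, T i l * v l = q i) (S : Finset (Fin n)) :
    ∑ i ∈ S, q i = ∑ i ∈ S, ∑ j ∈ Sᶜ, T i j * (v i - v j) := by
  have hq : ∀ i, q i = ∑ l, T i l * (v i - v l) := by
    intro i
    rw [← hv i]
    have : ∑ l, T i l * (v i - v l) = (∑ l, T i l) * v i - ∑ l, T i l * v l := by
      rw [Finset.sum_mul, ← Finset.sum_sub_distrib]
      exact Finset.sum_congr rfl fun l _ => by ring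
    rw [this, hrow i, one_mul]
  have hsplit : ∀ i, ∑ l, T i l * (v i - v l)
      = ∑ l ∈ S, T i l * (v i - v l) + ∑ l ∈ Sᶜ, T i l * (v i - v l) :=
    fun i => (Finset.sum_add_sum_compl S _).symm
  have hA : ∑ i ∈ S, ∑ l ∈ S, T i l * (v i - v l) = 0 := by
    have h1 : ∑ i ∈ S, ∑ l ∈ S, T i l * (v i - v l)
        = ∑ i ∈ S, ∑ l ∈ S, T l i * (v l - v i) := Finset.sum_comm
    have h2 : ∑ i ∈ S, ∑ l ∈ S, T l i * (v l - v i)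
        = - ∑ i ∈ S, ∑ l ∈ S, T i l * (v i - v l) := by
      rw [← Finset.sum_neg_distrib]
      apply Finset.sum_congr rfl; intro i _
      rw [← Finset.sum_neg_distrib]
      apply Finset.sum_congr rfl; intro l _
      rw [hsym l i]; ring
    linarith
  calc ∑ i ∈ S, q i = ∑ i ∈ S, ∑ l, T i l * (v i - v l) :=
        Finset.sum_congr rfl fun i _ => hq i
    _ = ∑ i ∈ S, (∑ l ∈ S, T i l * (v i - v l) + ∑ l ∈ Sᶜ, T i l * (v i - v l)) :=
        Finset.sum_congr rfl fun i _ => hsplit i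
    _ = (∑ i ∈ S, ∑ l ∈ S, T i l * (v i - v l)) + ∑ i ∈ S, ∑ l ∈ Sᶜ, T i l * (v i - v l) :=
        Finset.sum_add_distrib
    _ = ∑ i ∈ S, ∑ l ∈ Sᶜ, T i l * (v i - v l) := by rw [hA, zero_add]


lemma energy_identity {n : ℕ} (T : Matrix (Fin n) (Fin n) ℝ)
    (hsym : ∀ i j, T i j = T j i) (hrow : ∀ i, ∑ j, T i j = 1)
    (v q : Fin n → ℝ) (hv : ∀ i, v i - ∑ l, T i l * v l = q i) :
    ∑ i, q i * v i = (1 / 2) * ∑ i, ∑ l, T i l * (v i - v l) ^ 2 := by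
  have hcol : ∀ l, ∑ i, T i l = 1 := by
    intro l
    simp_rw [fun i => hsym i l]
    exact hrow l
  have e3 : ∑ i, ∑ l, T i l * v i ^ 2 = ∑ i, v i ^ 2 := by
    apply Finset.sum_congr rfl; intro i _
    rw [← Finset.sum_mul, hrow i, one_mul]
  have e4 : ∑ i, ∑ l, T i l * v l ^ 2 = ∑ l, v l ^ 2 := by
    rw [Finset.sum_comm]
    apply Finset.sum_congr rfl; intro l _
    rw [← Finset.sum_mul, hcol l, one_mul]
  have R : ∑ i, ∑ l, T i l * (v i - v l) ^ 2
      = (∑ i, v i ^ 2) + (∑ i, v i ^ 2) - 2 * ∑ i, ∑ l, T i l * (v i * v l) := by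
    calc ∑ i, ∑ l, T i l * (v i - v l) ^ 2
        = ∑ i, ∑ l, (T i l * v i ^ 2 + T i l * v l ^ 2 - 2 * (T i l * (v i * v l))) :=
          Finset.sum_congr rfl fun i _ => Finset.sum_congr rfl fun l _ => by ring
      _ = (∑ i, ∑ l, T i l * v i ^ 2) + (∑ i, ∑ l, T i l * v l ^ 2)
            - 2 * ∑ i, ∑ l, T i l * (v i * v l) := by
          simp only [Finset.sum_add_distrib, Finset.sum_sub_distrib, ← Finset.mul_sum]
      _ = _ := by rw [e3, e4]
  have L : ∑ i, q i * v i = (∑ i, v i ^ 2) - ∑ i, ∑ l, T i l * (v i * v l) := by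
    rw [← Finset.sum_sub_distrib]
    apply Finset.sum_congr rfl; intro i _
    rw [← hv i, sub_mul]
    have h1 : (∑ l, T i l * v l) * v i = ∑ l, T i l * (v i * v l) := by
      rw [Finset.sum_mul]
      exact Finset.sum_congr rfl fun l _ => by ring
    rw [h1]; ring
  rw [L, R]; ring


lemma c_pos {n : ℕ} (T : Matrix (Fin n) (Fin n) ℝ)
    (hsym : ∀ i j, T i j = T j i) (hnonneg : ∀ i j, 0 ≤ T i j)
    (hprim : ∃ k : ℕ, 0 < k ∧ ∀ a b, 0 < (T ^ k) a b)
    (a b : Fin n)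
    (c : ℝ)
    (hc : IsLeast {r : ℝ | ∃ S : Finset (Fin n), a ∈ S ∧ b ∉ S ∧
      r = ∑ i ∈ S, ∑ j ∈ Sᶜ, T i j} c) : 0 < c := by
  obtain ⟨S₀, haS, hbS, hceq⟩ := hc.1
  have hge : 0 ≤ c := hceq ▸ Finset.sum_nonneg fun i _ =>
    Finset.sum_nonneg fun j _ => hnonneg i j
  rcases eq_or_lt_of_le hge with heq | h
  · exfalso
    -- all crossing entries vanish
    have hzero : ∀ i ∈ S₀, ∀ j ∈ S₀ᶜ, T i j = 0 := by
      intro i hi j hj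
      have h1 : ∑ i ∈ S₀, ∑ j ∈ S₀ᶜ, T i j = 0 := by rw [← hceq, ← heq]
      have h2 := (Finset.sum_eq_zero_iff_of_nonneg
        (fun i _ => Finset.sum_nonneg fun j _ => hnonneg i j)).1 h1 i hi
      exact (Finset.sum_eq_zero_iff_of_nonneg (fun j _ => hnonneg i j)).1 h2 j hj
    have hblock : ∀ k : ℕ, ∀ i ∈ S₀, ∀ j ∈ S₀ᶜ, (T ^ k) i j = 0 := by
      intro k
      induction k with
      | zero =>
          intro i hi j hj
          have : i ≠ j := fun h => (Finset.mem_compl.1 hj) (h ▸ hi)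
          simp [Matrix.one_apply, this]
      | succ k ih =>
          intro i hi j hj
          rw [pow_succ, Matrix.mul_apply]
          apply Finset.sum_eq_zero
          intro l _
          by_cases hl : l ∈ S₀
          · rw [hzero l hl j hj, mul_zero]
          · rw [ih i hi l (Finset.mem_compl.2 hl), zero_mul]
    obtain ⟨k, -, hpos⟩ := hprim
    exact absurd (hblock k a haS b (Finset.mem_compl.2 hbS)) (ne_of_gt (hpos a b))
  · exact h

lemma sum_q_cut {n : ℕ} (a b : Fin n) (hab : a ≠ b) (S : Finset (Fin n))
    (haS : a ∈ S) (hbS : b ∉ S) :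
    ∑ i ∈ S, ((if i = a then (1 : ℝ) else 0) - (if i = b then 1 else 0)) = 1 := by
  rw [Finset.sum_sub_distrib]
  rw [Finset.sum_ite_eq' S a (fun _ => (1 : ℝ)), Finset.sum_ite_eq' S b (fun _ => (1 : ℝ))]
  simp [haS, hbS]

lemma lower_bound {n : ℕ} (T : Matrix (Fin n) (Fin n) ℝ)
    (hsym : ∀ i j, T i j = T j i) (hnonneg : ∀ i j, 0 ≤ T i j)
    (hrow : ∀ i, ∑ j, T i j = 1)
    (a b : Fin n) (hab : a ≠ b)
    (v : Fin n → ℝ)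
    (hv : ∀ i, v i - ∑ l, T i l * v l
      = (if i = a then (1 : ℝ) else 0) - (if i = b then 1 else 0))
    (c : ℝ) (hcpos : 0 < c)
    (hc : IsLeast {r : ℝ | ∃ S : Finset (Fin n), a ∈ S ∧ b ∉ S ∧
      r = ∑ i ∈ S, ∑ j ∈ Sᶜ, T i j} c) :
    1 / c ≤ v a - v b := by
  set q : Fin n → ℝ := fun i => (if i = a then (1 : ℝ) else 0) - (if i = b then 1 else 0)
    with hqdef
  obtain ⟨S₀, haS, hbS, hceq⟩ := hc.1
  -- flow through the optimal cut equals 1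
  have hflow : ∑ i ∈ S₀, ∑ j ∈ S₀ᶜ, T i j * (v i - v j) = 1 := by
    rw [← flow_identity T hsym hrow v q hv S₀]
    exact sum_q_cut a b hab S₀ haS hbS
  set P := S₀ ×ˢ S₀ᶜ with hPdef
  have hFP : ∑ p ∈ P, T p.1 p.2 * (v p.1 - v p.2) = 1 := by
    rw [hPdef, Finset.sum_product]; exact hflow
  have hcutP : ∑ p ∈ P, T p.1 p.2 = c := by
    rw [hPdef, Finset.sum_product]; exact hceq.symm
  set E := ∑ p ∈ P, T p.1 p.2 * (v p.1 - v p.2) ^ 2 with hEdef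
  have hcs : 1 ≤ c * E := by
    have h := Finset.sum_mul_sq_le_sq_mul_sq P (fun p => Real.sqrt (T p.1 p.2))
      (fun p => Real.sqrt (T p.1 p.2) * (v p.1 - v p.2))
    have h1 : ∑ p ∈ P, Real.sqrt (T p.1 p.2) * (Real.sqrt (T p.1 p.2) * (v p.1 - v p.2))
        = ∑ p ∈ P, T p.1 p.2 * (v p.1 - v p.2) :=
      Finset.sum_congr rfl fun p _ => by
        rw [← mul_assoc, Real.mul_self_sqrt (hnonneg _ _)]
    have h2 : ∑ p ∈ P, Real.sqrt (T p.1 p.2) ^ 2 = ∑ p ∈ P, T p.1 p.2 :=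
      Finset.sum_congr rfl fun p _ => Real.sq_sqrt (hnonneg _ _)
    have h3 : ∑ p ∈ P, (Real.sqrt (T p.1 p.2) * (v p.1 - v p.2)) ^ 2
        = ∑ p ∈ P, T p.1 p.2 * (v p.1 - v p.2) ^ 2 :=
      Finset.sum_congr rfl fun p _ => by rw [mul_pow, Real.sq_sqrt (hnonneg _ _)]
    rw [h1, h2, h3, hFP, hcutP, ← hEdef] at h
    simpa using h
  have hqv : ∑ i, q i * v i = v a - v b := by
    simp only [hqdef, sub_mul, one_mul, zero_mul, ite_mul, Finset.sum_sub_distrib]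
    rw [Finset.sum_ite_eq' Finset.univ a (fun i => v i),
      Finset.sum_ite_eq' Finset.univ b (fun i => v i)]
    simp
  have hfull : ∑ i, ∑ l, T i l * (v i - v l) ^ 2 = 2 * (v a - v b) := by
    have h := energy_identity T hsym hrow v q hv
    rw [hqv] at h
    linarith
  have hswap : ∑ p ∈ S₀ᶜ ×ˢ S₀, T p.1 p.2 * (v p.1 - v p.2) ^ 2 = E := by
    rw [hEdef, hPdef]
    apply Finset.sum_equiv (Equiv.prodComm (Fin n) (Fin n))
    · intro p
      simp only [Finset.mem_product, Equiv.prodComm_apply, Prod.fst_swap, Prod.snd_swap]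
      exact and_comm
    · intro p _
      simp only [Equiv.prodComm_apply, Prod.fst_swap, Prod.snd_swap]
      rw [hsym p.1 p.2]; ring
  have hdisj : Disjoint (S₀ ×ˢ S₀ᶜ) (S₀ᶜ ×ˢ S₀) := by
    rw [Finset.disjoint_left]
    intro p hp hp'
    rw [Finset.mem_product] at hp hp'
    exact (Finset.mem_compl.1 hp'.1) hp.1
  have hE_le : E + E ≤ 2 * (v a - v b) := by
    calc E + E = ∑ p ∈ S₀ ×ˢ S₀ᶜ, T p.1 p.2 * (v p.1 - v p.2) ^ 2
          + ∑ p ∈ S₀ᶜ ×ˢ S₀, T p.1 p.2 * (v p.1 - v p.2) ^ 2 := by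
          rw [hswap, hEdef, hPdef]
      _ = ∑ p ∈ (S₀ ×ˢ S₀ᶜ) ∪ (S₀ᶜ ×ˢ S₀), T p.1 p.2 * (v p.1 - v p.2) ^ 2 :=
          (Finset.sum_union hdisj).symm
      _ ≤ ∑ p ∈ Finset.univ ×ˢ Finset.univ, T p.1 p.2 * (v p.1 - v p.2) ^ 2 :=
          Finset.sum_le_sum_of_subset_of_nonneg (Finset.subset_univ _)
            (fun p _ _ => mul_nonneg (hnonneg _ _) (sq_nonneg _))
      _ = ∑ i, ∑ l, T i l * (v i - v l) ^ 2 := by rw [Finset.sum_product]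
      _ = 2 * (v a - v b) := hfull
  rw [div_le_iff₀ hcpos]
  nlinarith [hcs, hE_le, hcpos]


lemma upper_bound {n : ℕ} (T : Matrix (Fin n) (Fin n) ℝ)
    (hsym : ∀ i j, T i j = T j i) (hnonneg : ∀ i j, 0 ≤ T i j)
    (hrow : ∀ i, ∑ j, T i j = 1)
    (a b : Fin n) (hab : a ≠ b)
    (v : Fin n → ℝ)
    (hv : ∀ i, v i - ∑ l, T i l * v l
      = (if i = a then (1 : ℝ) else 0) - (if i = b then 1 else 0))
    (c : ℝ) (hcpos : 0 < c)
    (hc : IsLeast {r : ℝ | ∃ S : Finset (Fin n), a ∈ S ∧ b ∉ S ∧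
      r = ∑ i ∈ S, ∑ j ∈ Sᶜ, T i j} c)
    (hvab : v b < v a) :
    v a - v b ≤ (n : ℝ) / c := by
  have hn : 0 < n := a.pos
  set q : Fin n → ℝ := fun i => (if i = a then (1 : ℝ) else 0) - (if i = b then 1 else 0)
    with hqdef
  -- flow through any threshold cut is 1
  have hgap : ∀ t g : ℝ, 0 < g → v b ≤ t → t < v a →
      (∀ i, t < v i → ∀ j, v j ≤ t → g ≤ v i - v j) → g ≤ 1 / c := by
    intro t g hg hbt hta hsep
    set S : Finset (Fin n) := Finset.univ.filter (fun i => t < v i) with hSdef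
    have haS : a ∈ S := by simp [hSdef, hta]
    have hbS : b ∉ S := by simp [hSdef, not_lt.2 hbt]
    have h1 : (1 : ℝ) = ∑ i ∈ S, ∑ j ∈ Sᶜ, T i j * (v i - v j) := by
      rw [← flow_identity T hsym hrow v q hv S]
      exact (sum_q_cut a b hab S haS hbS).symm
    have h2 : ∑ i ∈ S, ∑ j ∈ Sᶜ, T i j * g ≤ ∑ i ∈ S, ∑ j ∈ Sᶜ, T i j * (v i - v j) := by
      apply Finset.sum_le_sum
      intro i hi
      apply Finset.sum_le_sum
      intro j hj
      have hvi : t < v i := by simpa [hSdef] using hi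
      have hvj : v j ≤ t := by
        have := Finset.mem_compl.1 hj
        simpa [hSdef, not_lt] using this
      exact mul_le_mul_of_nonneg_left (hsep i hvi j hvj) (hnonneg i j)
    have h3 : ∑ i ∈ S, ∑ j ∈ Sᶜ, T i j * g = (∑ i ∈ S, ∑ j ∈ Sᶜ, T i j) * g := by
      rw [Finset.sum_mul]
      exact Finset.sum_congr rfl fun i _ => (Finset.sum_mul _ _ _).symm
    have h4 : c ≤ ∑ i ∈ S, ∑ j ∈ Sᶜ, T i j := hc.2 ⟨S, haS, hbS, rfl⟩
    rw [le_div_iff₀ hcpos]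
    nlinarith
  -- sorted values
  set σ := Tuple.sort v with hσdef
  have hn1 : n - 1 < n := Nat.sub_lt hn one_pos
  set W : ℕ → ℝ := fun k => v (σ ⟨min k (n - 1), lt_of_le_of_lt (min_le_right _ _) hn1⟩)
    with hWdef
  have hWmono : Monotone W := by
    intro k l hkl
    exact Tuple.monotone_sort v (by
      rw [Fin.mk_le_mk]
      exact min_le_min hkl le_rfl)
  have hWval : ∀ i : Fin n, W ((σ.symm i : Fin n) : ℕ) = v i := by
    intro i
    have hk : ((σ.symm i : Fin n) : ℕ) ≤ n - 1 := Nat.le_pred_of_lt (σ.symm i).2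
    simp only [hWdef, min_eq_left hk, Fin.eta, Equiv.apply_symm_apply]
  have hWtop : ∀ i, v i ≤ W (n - 1) := by
    intro i
    rw [← hWval i]
    exact hWmono (Nat.le_pred_of_lt (σ.symm i).2)
  have hWbot : ∀ i, W 0 ≤ v i := by
    intro i
    rw [← hWval i]
    exact hWmono (Nat.zero_le _)
  have hWsep : ∀ k : ℕ, k < n - 1 → ∀ i : Fin n, W k < v i → W (k + 1) ≤ v i := by
    intro k hk i h
    rw [← hWval i] at h ⊢
    have hpk : k < ((σ.symm i : Fin n) : ℕ) := by
      by_contra h'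
      push_neg at h'
      exact absurd (hWmono h') (not_le.2 h)
    exact hWmono hpk
  set clamp : ℝ → ℝ := fun x => max (min x (v a)) (v b) with hclampdef
  have hclamp_le_va : ∀ x, clamp x ≤ v a :=
    fun x => max_le (min_le_right _ _) hvab.le
  have hclamp_ge_vb : ∀ x, v b ≤ clamp x := fun x => le_max_right _ _
  have hclamp_top : clamp (W (n - 1)) = v a := by
    rw [hclampdef]
    simp only
    rw [min_eq_right (hWtop a), max_eq_left hvab.le]
  have hclamp_bot : clamp (W 0) = v b := by
    rw [hclampdef]
    simp only
    rw [min_eq_left (le_trans (hWbot b) hvab.le), max_eq_right (hWbot b)]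
  have htel : v a - v b = ∑ k ∈ Finset.range (n - 1), (clamp (W (k + 1)) - clamp (W k)) := by
    rw [Finset.sum_range_sub (fun k => clamp (W k)), hclamp_top, hclamp_bot]
  have hgapk : ∀ k ∈ Finset.range (n - 1), clamp (W (k + 1)) - clamp (W k) ≤ 1 / c := by
    intro k hk
    rw [Finset.mem_range] at hk
    by_cases hle : clamp (W (k + 1)) ≤ clamp (W k)
    · have : (0 : ℝ) ≤ 1 / c := by positivity
      linarith
    · push_neg at hle
      set g := clamp (W (k + 1)) - clamp (W k) with hgdef
      have hg : 0 < g := by simp [hgdef]; linarith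
      have hWk_le_va : W k ≤ v a := by
        by_contra h'
        push_neg at h'
        have : clamp (W k) = v a := by
          rw [hclampdef]
          simp only
          rw [min_eq_right h'.le, max_eq_left hvab.le]
        exact absurd (lt_of_lt_of_le (this ▸ hle) (hclamp_le_va (W (k + 1)))) (lt_irrefl _)
      have hclampWk : clamp (W k) = max (W k) (v b) := by
        rw [hclampdef]; simp only [min_eq_left hWk_le_va]
      set t := max (W k) (v b) with htdef
      have hbt : v b ≤ t := le_max_right _ _
      have hta : t < v a := by
        rw [← hclampWk]
        exact lt_of_lt_of_le hle (hclamp_le_va _)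
      apply hgap t g hg hbt hta
      intro i hi j hj
      have hWki : W k < v i := lt_of_le_of_lt (le_max_left _ _) hi
      have hW1i : W (k + 1) ≤ v i := hWsep k hk i hWki
      have hci : clamp (W (k + 1)) ≤ v i := by
        apply max_le
        · exact le_trans (min_le_left _ _) hW1i
        · exact le_trans hbt hi.le
      have hcj : v j ≤ clamp (W k) := by rw [hclampWk]; exact hj
      simp only [hgdef]
      linarith
  calc v a - v b = ∑ k ∈ Finset.range (n - 1), (clamp (W (k + 1)) - clamp (W k)) := htel
    _ ≤ ∑ _k ∈ Finset.range (n - 1), 1 / c := Finset.sum_le_sum hgapk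
    _ = (n - 1 : ℕ) * (1 / c) := by rw [Finset.sum_const, Finset.card_range, nsmul_eq_mul]
    _ ≤ (n : ℝ) * (1 / c) := by
        apply mul_le_mul_of_nonneg_right _ (by positivity)
        exact_mod_cast Nat.cast_le.2 (Nat.sub_le n 1)
    _ = (n : ℝ) / c := by rw [mul_one_div]


end Stmt13

/-- Theorem 10: for the Markov chain with symmetric doubly stochastic primitive
transition matrix `T`, the mean commute time between distinct states `a` and
`b` satisfies `n/c_ab ≤ m_ab + m_ba ≤ n²/c_ab`, where `c_ab` is the minimum
relative cut value between `a` and `b` in the weighted graph with weights `T_ij`. -/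
theorem stmt_13 {n : ℕ}
    (T : Matrix (Fin n) (Fin n) ℝ)
    (hsym : ∀ i j, T i j = T j i)
    (hnonneg : ∀ i j, 0 ≤ T i j)
    (hrow : ∀ i, ∑ j, T i j = 1)
    (hprim : ∃ k : ℕ, 0 < k ∧ ∀ a b, 0 < (T ^ k) a b)
    (a b : Fin n) (hab : a ≠ b)
    -- c_ab : the minimum relative cut value between a and b
    (c : ℝ)
    (hc : IsLeast {r : ℝ | ∃ S : Finset (Fin n), a ∈ S ∧ b ∉ S ∧
      r = ∑ i ∈ S, ∑ j ∈ Sᶜ, T i j} c) :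
    (n : ℝ) / c ≤ mfp T a b + mfp T b a ∧ mfp T a b + mfp T b a ≤ (n : ℝ) ^ 2 / c := by
  classical
  have hn : 0 < n := a.pos
  have hv : ∀ i, (fundY T i a - fundY T i b) - ∑ l, T i l * (fundY T l a - fundY T l b)
      = (if i = a then (1 : ℝ) else 0) - (if i = b then 1 else 0) := by
    intro i
    have ha := Stmt13.harmonic hn T hsym hnonneg hrow hprim i a
    have hb := Stmt13.harmonic hn T hsym hnonneg hrow hprim i b
    have hsplit : ∑ l, T i l * (fundY T l a - fundY T l b)
        = (∑ l, T i l * fundY T l a) - ∑ l, T i l * fundY T l b := by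
      rw [← Finset.sum_sub_distrib]
      exact Finset.sum_congr rfl fun l _ => by ring
    rw [hsplit]
    linarith
  have hcpos : 0 < c := Stmt13.c_pos T hsym hnonneg hprim a b c hc
  have low : 1 / c ≤ (fundY T a a - fundY T a b) - (fundY T b a - fundY T b b) :=
    Stmt13.lower_bound T hsym hnonneg hrow a b hab
      (fun i => fundY T i a - fundY T i b) hv c hcpos hc
  have hvab : (fundY T b a - fundY T b b) < (fundY T a a - fundY T a b) := by
    have h0 : (0 : ℝ) < 1 / c := by positivity
    linarith
  have up : (fundY T a a - fundY T a b) - (fundY T b a - fundY T b b) ≤ (n : ℝ) / c :=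
    Stmt13.upper_bound T hsym hnonneg hrow a b hab
      (fun i => fundY T i a - fundY T i b) hv c hcpos hc hvab
  have hcommute : mfp T a b + mfp T b a
      = n * ((fundY T a a - fundY T a b) - (fundY T b a - fundY T b b)) := by
    simp only [mfp]
    ring
  constructor
  · rw [hcommute]
    calc (n : ℝ) / c = n * (1 / c) := by ring
      _ ≤ n * ((fundY T a a - fundY T a b) - (fundY T b a - fundY T b b)) :=
          mul_le_mul_of_nonneg_left low (by positivity)
  · rw [hcommute]
    calc (n : ℝ) * ((fundY T a a - fundY T a b) - (fundY T b a - fundY T b b))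
        ≤ n * ((n : ℝ) / c) := mul_le_mul_of_nonneg_left up (by positivity)
      _ = (n : ℝ) ^ 2 / c := by ring
end
end

section
/- Let Z be a symmetric doubly stochastic primitive n×n matrix (so the Markov chain with transition matrix Z has uniform stationary distribution π = e/n). For distinct states a, b, let ρ_ab be the minimum normalized relative cut value between a and b. Then the mean commute time satisfies m_ab + m_ba ≤ 3 n log n / ρ_ab. -/
open Matrix

noncomputable section

/-!
The potential `v i = fundY Z i a - fundY Z i b` solves `v - Z v = e_a - e_b`, and
`m_ab + m_ba = n (v a - v b)`. Since `Z` is symmetric and stochastic, this says that a unit flow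
`Z i j (v i - v j)` crosses every cut `S ∋ a`, `b ∉ S`. Sorting the states by `v`, the jump of `v`
across the level cut `S` with `#Sᶜ = k` is therefore at most
`1 / ∑_{i ∈ S, j ∉ S} Z i j ≤ n / (ρ_ab k (n - k))`, and summing over `k` gives
`v a - v b ≤ 2 H_{n-1} / ρ_ab ≤ 3 log n / ρ_ab`.

The series defining `fundY Z` converges because `Z - Z^∞` is symmetric and, by primitivity, all
its eigenvalues lie in `(-1, 1)`.
-/

open Finset Real

section Stochastic

variable {ι : Type*} [Fintype ι]

theorem pow_mulVec_of_mulVec_eq_smul [DecidableEq ι] {A : Matrix ι ι ℝ} {x : ι → ℝ} {μ : ℝ}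
    (h : A *ᵥ x = μ • x) (m : ℕ) : (A ^ m) *ᵥ x = μ ^ m • x := by
  induction m with
  | zero => simp
  | succ m ih => rw [pow_succ', ← mulVec_mulVec, ih, mulVec_smul, h, smul_smul, pow_succ]

theorem eigenvalue_lt_one_of_pos {W : Matrix ι ι ℝ} (hpos : ∀ i j, 0 < W i j)
    (hrow : ∀ i, ∑ j, W i j = 1) {x : ι → ℝ} (hx : x ≠ 0) (hsum : ∑ i, x i = 0) {μ : ℝ}
    (hμ : W *ᵥ x = μ • x) : μ < 1 := by
  obtain ⟨i, -⟩ := Function.ne_iff.1 hx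
  obtain ⟨i₀, -, hmax⟩ := exists_max_image univ x ⟨i, mem_univ i⟩
  have hmax_pos : 0 < x i₀ := by
    by_contra! h
    exact hx <| funext fun j => (sum_eq_zero_iff_of_nonpos fun l _ =>
      (hmax l (mem_univ l)).trans h).1 hsum j (mem_univ j)
  -- otherwise `∑ i, x i = card ι • x i₀ > 0`
  obtain ⟨j, -, hj⟩ : ∃ j ∈ univ, x j < x i₀ := by
    refine exists_lt_of_sum_lt ?_
    rw [hsum, sum_const, nsmul_eq_mul]
    exact mul_pos (by exact_mod_cast card_pos.2 ⟨i, mem_univ i⟩) hmax_pos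
  have : μ * x i₀ < 1 * x i₀ :=
    calc μ * x i₀ = ∑ l, W i₀ l * x l := (congrFun hμ i₀).symm
      _ < ∑ l, W i₀ l * x i₀ := sum_lt_sum
          (fun l _ => mul_le_mul_of_nonneg_left (hmax l (mem_univ l)) (hpos i₀ l).le)
          ⟨j, mem_univ j, mul_lt_mul_of_pos_left hj (hpos i₀ j)⟩
      _ = 1 * x i₀ := by rw [← sum_mul, hrow]
  exact lt_of_mul_lt_mul_right this hmax_pos.le

theorem abs_eigenvalue_lt_one [DecidableEq ι] {Z : Matrix ι ι ℝ} (hZ : Z ∈ rowStochastic ℝ ι)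
    {k : ℕ} (hk : 0 < k) (hprim : ∀ i j, 0 < (Z ^ k) i j) {x : ι → ℝ} (hx : x ≠ 0)
    (hsum : ∑ i, x i = 0) {μ : ℝ} (hμ : Z *ᵥ x = μ • x) : |μ| < 1 := by
  -- `Z ^ (2 * k)` is positive and has the nonnegative eigenvalue `μ ^ (2 * k)`
  have hpos : ∀ i j, 0 < (Z ^ (2 * k)) i j := by
    intro i j
    obtain ⟨i', -⟩ := Function.ne_iff.1 hx
    rw [two_mul, pow_add, mul_apply]
    exact sum_pos (fun l _ => mul_pos (hprim i l) (hprim l j)) ⟨i', mem_univ i'⟩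
  have hrow := sum_row_of_mem_rowStochastic (pow_mem hZ (2 * k))
  have h := eigenvalue_lt_one_of_pos hpos hrow hx hsum (pow_mulVec_of_mulVec_eq_smul hμ _)
  rwa [pow_mul, ← sq_abs, ← pow_mul, pow_lt_one_iff_of_nonneg (abs_nonneg μ) (by omega)] at h

theorem sum_col_of_isSymm [DecidableEq ι] {Z : Matrix ι ι ℝ} (hZ : Z ∈ rowStochastic ℝ ι)
    (hsym : Z.IsSymm) (j : ι) : ∑ i, Z i j = 1 := by
  simp_rw [hsym.apply j]
  exact sum_row_of_mem_rowStochastic hZ j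

end Stochastic

theorem Matrix.IsHermitian.summable_pow_apply {ι : Type*} [Fintype ι] [DecidableEq ι]
    {M : Matrix ι ι ℝ} (hM : M.IsHermitian) (hμ : ∀ l, |hM.eigenvalues l| < 1) (i j : ι) :
    Summable fun p : ℕ => (M ^ p) i j := by
  have hpow : ∀ p : ℕ, (M ^ p) i j =
      ∑ l, hM.eigenvectorBasis l i * hM.eigenvectorBasis l j * hM.eigenvalues l ^ p := by
    intro p
    have h : M ^ p = _ := congrArg (· ^ p) hM.spectral_theorem
    rw [h, ← map_pow, Unitary.conjStarAlgAut_apply, diagonal_pow, mul_apply]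
    simp [mul_diagonal, star_apply, mul_right_comm]
  simp_rw [hpow]
  exact summable_sum fun l _ =>
    (summable_geometric_of_abs_lt_one (hμ l)).mul_left _

section Averaging

variable {n : ℕ} {Z : Matrix (Fin n) (Fin n) ℝ}

def averagingMatrix (n : ℕ) : Matrix (Fin n) (Fin n) ℝ :=
  of fun _ _ => 1 / n

theorem mul_averagingMatrix (hZ : Z ∈ rowStochastic ℝ (Fin n)) :
    Z * averagingMatrix n = averagingMatrix n := by
  ext i j
  simp [averagingMatrix, mul_apply, ← sum_mul, sum_row_of_mem_rowStochastic hZ]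

theorem averagingMatrix_mul (hZ : Z ∈ rowStochastic ℝ (Fin n)) (hsym : Z.IsSymm) :
    averagingMatrix n * Z = averagingMatrix n := by
  ext i j
  simp [averagingMatrix, mul_apply, ← mul_sum, sum_col_of_isSymm hZ hsym]

theorem isSymm_averagingMatrix : (averagingMatrix n).IsSymm :=
  IsSymm.ext fun _ _ => rfl

theorem averagingMatrix_mul_self : averagingMatrix n * averagingMatrix n = averagingMatrix n := by
  ext i j
  have hn : (n : ℝ) ≠ 0 := by exact_mod_cast (Fin.pos i).ne'
  simp [averagingMatrix, mul_apply]
  field_simp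

theorem averagingMatrix_mulVec_eq_zero {x : Fin n → ℝ} (hx : ∑ i, x i = 0) :
    averagingMatrix n *ᵥ x = 0 := by
  ext i
  simp [averagingMatrix, mulVec, dotProduct, ← mul_sum, hx]

theorem sub_averagingMatrix_pow_succ (hZ : Z ∈ rowStochastic ℝ (Fin n)) (hsym : Z.IsSymm)
    (k : ℕ) : (Z - averagingMatrix n) ^ (k + 1) = Z ^ (k + 1) - averagingMatrix n := by
  induction k with
  | zero => simp
  | succ k ih =>
    rw [pow_succ, ih, sub_mul, mul_sub, mul_sub, ← pow_succ,
      mul_averagingMatrix (pow_mem hZ _), averagingMatrix_mul hZ hsym, averagingMatrix_mul_self]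
    abel

theorem sum_sub_averagingMatrix_mulVec_eq_zero (hZ : Z ∈ rowStochastic ℝ (Fin n)) (hsym : Z.IsSymm)
    (x : Fin n → ℝ) : ∑ i, ((Z - averagingMatrix n) *ᵥ x) i = 0 := by
  simp only [mulVec, dotProduct]
  rw [sum_comm]
  refine sum_eq_zero fun j _ => ?_
  have hn : (n : ℝ) ≠ 0 := by exact_mod_cast (Fin.pos j).ne'
  simp [averagingMatrix, ← sum_mul, sum_col_of_isSymm hZ hsym, hn]

theorem abs_eigenvalues_sub_averagingMatrix_lt_one (hZ : Z ∈ rowStochastic ℝ (Fin n))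
    (hsym : Z.IsSymm) {k : ℕ} (hk : 0 < k) (hprim : ∀ i j, 0 < (Z ^ k) i j)
    (hM : (Z - averagingMatrix n).IsHermitian) (l : Fin n) : |hM.eigenvalues l| < 1 := by
  set u : Fin n → ℝ := ⇑(hM.eigenvectorBasis l)
  have hu : (Z - averagingMatrix n) *ᵥ u = hM.eigenvalues l • u := hM.mulVec_eigenvectorBasis l
  rcases eq_or_ne (hM.eigenvalues l) 0 with h0 | h0
  · simp [h0]
  have hsum : ∑ i, u i = 0 := by
    have h := sum_sub_averagingMatrix_mulVec_eq_zero hZ hsym u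
    simp only [hu, Pi.smul_apply, smul_eq_mul, ← mul_sum] at h
    exact (mul_eq_zero.1 h).resolve_left h0
  have hne : u ≠ 0 := fun h =>
    hM.eigenvectorBasis.orthonormal.ne_zero l (by ext i; exact congrFun h i)
  refine abs_eigenvalue_lt_one hZ hk hprim hne hsum ?_
  rw [← hu, sub_mulVec, averagingMatrix_mulVec_eq_zero hsum, sub_zero]

theorem summable_pow_apply_sub (hZ : Z ∈ rowStochastic ℝ (Fin n)) (hsym : Z.IsSymm) {k : ℕ}
    (hk : 0 < k) (hprim : ∀ i j, 0 < (Z ^ k) i j) (i j : Fin n) :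
    Summable fun m : ℕ => (Z ^ m) i j - 1 / n := by
  have hM : (Z - averagingMatrix n).IsHermitian :=
    isHermitian_iff_isSymm.2 (hsym.sub isSymm_averagingMatrix)
  refine (summable_nat_add_iff 1).1 ?_
  have := hM.summable_pow_apply (abs_eigenvalues_sub_averagingMatrix_lt_one hZ hsym hk hprim hM) i j
  refine ((summable_nat_add_iff 1).2 this).congr fun m => ?_
  rw [sub_averagingMatrix_pow_succ hZ hsym]
  simp [averagingMatrix]

end Averaging

section Cut

variable {ι : Type*} [Fintype ι] [DecidableEq ι]

theorem sum_sub_mulVec_eq_sum_cut {Z : Matrix ι ι ℝ} (hZ : Z ∈ rowStochastic ℝ ι)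
    (hsym : Z.IsSymm) (v : ι → ℝ) (S : Finset ι) :
    ∑ i ∈ S, (v i - (Z *ᵥ v) i) = ∑ i ∈ S, ∑ j ∈ Sᶜ, Z i j * (v i - v j) := by
  have hrow (i : ι) : v i - (Z *ᵥ v) i = ∑ j, Z i j * (v i - v j) := by
    simp [mulVec, dotProduct, mul_sub, sum_sub_distrib, ← sum_mul,
      sum_row_of_mem_rowStochastic hZ]
  -- the flow inside `S` cancels by antisymmetry of `Z i j * (v i - v j)`
  have hinner : ∑ i ∈ S, ∑ j ∈ S, Z i j * (v i - v j) = 0 := by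
    have h : ∑ i ∈ S, ∑ j ∈ S, Z i j * (v i - v j) =
        -∑ i ∈ S, ∑ j ∈ S, Z i j * (v i - v j) := by
      conv_lhs => rw [sum_comm]
      simp only [← sum_neg_distrib]
      exact sum_congr rfl fun _ _ => sum_congr rfl fun _ _ => by rw [hsym.apply]; ring
    linarith
  simp_rw [hrow, ← sum_add_sum_compl S, sum_add_distrib, hinner, zero_add]

end Cut

section Fundamental

variable {n : ℕ} {Z : Matrix (Fin n) (Fin n) ℝ}

theorem fundY_sub_mul_fundY (hZ : Z ∈ rowStochastic ℝ (Fin n)) (hsym : Z.IsSymm) {k : ℕ}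
    (hk : 0 < k) (hprim : ∀ i j, 0 < (Z ^ k) i j) :
    fundY Z - Z * fundY Z = 1 - averagingMatrix n := by
  have hsum := summable_pow_apply_sub hZ hsym hk hprim
  ext i j
  have hshift : (Z * fundY Z) i j = ∑' m : ℕ, ((Z ^ (m + 1)) i j - 1 / n) := by
    simp only [mul_apply, fundY, of_apply, ← tsum_mul_left]
    rw [← Summable.tsum_finsetSum fun l _ => (hsum l j).mul_left (Z i l)]
    refine tsum_congr fun m => ?_
    simp [mul_sub, ← sum_mul, sum_row_of_mem_rowStochastic hZ, pow_succ', mul_apply]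
  rw [Matrix.sub_apply, hshift, fundY, of_apply, (hsum i j).tsum_eq_zero_add]
  simp [averagingMatrix]

theorem sum_cut_fundY (hZ : Z ∈ rowStochastic ℝ (Fin n)) (hsym : Z.IsSymm) {k : ℕ}
    (hk : 0 < k) (hprim : ∀ i j, 0 < (Z ^ k) i j) {a b : Fin n} {S : Finset (Fin n)}
    (ha : a ∈ S) (hb : b ∉ S) :
    ∑ i ∈ S, ∑ j ∈ Sᶜ, Z i j * ((fundY Z i a - fundY Z i b) - (fundY Z j a - fundY Z j b)) =
      1 := by
  have hY := fundY_sub_mul_fundY hZ hsym hk hprim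
  have hv (i : Fin n) : (fundY Z i a - fundY Z i b) -
      (Z *ᵥ fun l => fundY Z l a - fundY Z l b) i =
        (if i = a then 1 else 0) - (if i = b then 1 else 0) := by
    have ha := congrFun (congrFun hY i) a
    have hb := congrFun (congrFun hY i) b
    simp only [Matrix.sub_apply, mul_apply, one_apply] at ha hb
    have hconst : averagingMatrix n i a = averagingMatrix n i b := rfl
    simp only [mulVec, dotProduct, mul_sub, sum_sub_distrib]
    linarith
  rw [← sum_sub_mulVec_eq_sum_cut hZ hsym (fun i => fundY Z i a - fundY Z i b)]
  simp_rw [hv, sum_sub_distrib, sum_ite_eq', if_pos ha, if_neg hb, sub_zero]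

end Fundamental

theorem sub_le_sum_of_forall_sub_le {n : ℕ} {v : Fin n → ℝ} {a b : Fin n} {f : ℕ → ℝ}
    (hf : ∀ k ∈ Ico 1 n, 0 ≤ f k)
    (hgap : ∀ (S : Finset (Fin n)) (s t : ℝ), a ∈ S → b ∉ S →
      (∀ i ∈ S, s ≤ v i) → (∀ j ∉ S, v j ≤ t) → s - t ≤ f #Sᶜ) :
    v a - v b ≤ ∑ k ∈ Ico 1 n, f k := by
  set σ := Tuple.sort v
  have hmono : Monotone (v ∘ σ) := Tuple.monotone_sort v
  set w : ℕ → ℝ := fun k => if h : k < n then v (σ ⟨k, h⟩) else 0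
  have hw (i : Fin n) : w i = v (σ i) := by simp [w]
  rcases le_or_gt (σ.symm a) (σ.symm b) with hab | hba
  · have h := hmono hab
    simp only [Function.comp_apply, Equiv.apply_symm_apply] at h
    linarith [sum_nonneg hf]
  -- cut between the `k + 1` lowest values of `v` and the others
  have hstep : ∀ k ∈ Ico (σ.symm b : ℕ) (σ.symm a), w (k + 1) - w k ≤ f (k + 1) := by
    intro k hk
    obtain ⟨hbk, hka⟩ := mem_Ico.1 hk
    have hk1 : k + 1 < n := by omega
    set T : Finset (Fin n) := (Iic (⟨k, by omega⟩ : Fin n)).map σ.toEmbedding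
    have hT (i : Fin n) : i ∈ T ↔ (σ.symm i : ℕ) ≤ k := by
      simp [T, mem_map_equiv, Fin.le_def]
    have hcard : #T = k + 1 := by simp [T, Fin.card_Iic]
    have h := hgap Tᶜ (w (k + 1)) (w k) (by simp [hT]; omega) (by simp [hT]; omega)
      (fun i hi => ?_) (fun j hj => ?_)
    · rwa [compl_compl, hcard] at h
    · have hle : (⟨k + 1, hk1⟩ : Fin n) ≤ σ.symm i := by
        rw [mem_compl, hT] at hi
        exact Fin.le_def.2 (by simp; omega)
      simpa [w, hk1] using hmono hle
    · have hle : σ.symm j ≤ (⟨k, by omega⟩ : Fin n) := by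
        rw [notMem_compl, hT] at hj
        exact Fin.le_def.2 hj
      simpa [w, show k < n by omega] using hmono hle
  calc v a - v b = w (σ.symm a) - w (σ.symm b) := by simp [hw]
    _ = ∑ k ∈ Ico (σ.symm b : ℕ) (σ.symm a), (w (k + 1) - w k) := by
      rw [sum_Ico_eq_sub _ hba.le, sum_range_sub, sum_range_sub]
      ring
    _ ≤ ∑ k ∈ Ico (σ.symm b : ℕ) (σ.symm a), f (k + 1) := sum_le_sum hstep
    _ = ∑ k ∈ Ico ((σ.symm b : ℕ) + 1) (σ.symm a + 1), f k := sum_Ico_add' f _ _ 1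
    _ ≤ ∑ k ∈ Ico 1 n, f k := sum_le_sum_of_subset_of_nonneg
      (Ico_subset_Ico (by omega) (by omega)) fun k hk _ => hf k hk

section NormalizedCut

variable {n : ℕ}

def normalizedCut (Z : Matrix (Fin n) (Fin n) ℝ) (S : Finset (Fin n)) : ℝ :=
  (∑ i ∈ S, ∑ j ∈ Sᶜ, (1 / (n : ℝ)) * Z i j) / (((S.card : ℝ) / n) * ((Sᶜ.card : ℝ) / n))

theorem cast_card_eq_sub_card_compl (S : Finset (Fin n)) : (#S : ℝ) = n - #Sᶜ := by
  rw [eq_sub_iff_add_eq, ← Nat.cast_add, card_add_card_compl, Fintype.card_fin]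

theorem normalizedCut_eq (hn : n ≠ 0) (Z : Matrix (Fin n) (Fin n) ℝ) (S : Finset (Fin n)) :
    normalizedCut Z S = n * (∑ i ∈ S, ∑ j ∈ Sᶜ, Z i j) / (#S * #Sᶜ) := by
  have hn' : (n : ℝ) ≠ 0 := by exact_mod_cast hn
  simp only [normalizedCut, ← mul_sum]
  field_simp

variable {Z : Matrix (Fin n) (Fin n) ℝ} {S : Finset (Fin n)}

theorem exists_pos_of_sum_cut_ne_zero (hnonneg : ∀ i j, 0 ≤ Z i j) {v : Fin n → ℝ}
    (hflow : ∑ i ∈ S, ∑ j ∈ Sᶜ, Z i j * (v i - v j) ≠ 0) : ∃ i ∈ S, ∃ j ∈ Sᶜ, 0 < Z i j := by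
  obtain ⟨i, hi, hi'⟩ := exists_ne_zero_of_sum_ne_zero hflow
  obtain ⟨j, hj, hj'⟩ := exists_ne_zero_of_sum_ne_zero hi'
  exact ⟨i, hi, j, hj, (hnonneg i j).lt_of_ne fun h => hj' (by rw [← h, zero_mul])⟩

theorem normalizedCut_pos (hnonneg : ∀ i j, 0 ≤ Z i j) {v : Fin n → ℝ}
    (hflow : ∑ i ∈ S, ∑ j ∈ Sᶜ, Z i j * (v i - v j) = 1) : 0 < normalizedCut Z S := by
  obtain ⟨i, hi, j, hj, hij⟩ := exists_pos_of_sum_cut_ne_zero hnonneg (hflow ▸ one_ne_zero)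
  have hcut : 0 < ∑ i ∈ S, ∑ j ∈ Sᶜ, Z i j :=
    sum_pos' (fun _ _ => sum_nonneg fun _ _ => hnonneg _ _)
      ⟨i, hi, sum_pos' (fun _ _ => hnonneg _ _) ⟨j, hj, hij⟩⟩
  have hS : 0 < #S := card_pos.2 ⟨i, hi⟩
  have hSc : 0 < #Sᶜ := card_pos.2 ⟨j, hj⟩
  have hn : 0 < n := Fin.pos i
  rw [normalizedCut_eq hn.ne']
  positivity

theorem sub_le_of_le_normalizedCut (hnonneg : ∀ i j, 0 ≤ Z i j) {v : Fin n → ℝ}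
    (hflow : ∑ i ∈ S, ∑ j ∈ Sᶜ, Z i j * (v i - v j) = 1) {ρ : ℝ} (hρ : 0 < ρ)
    (hρS : ρ ≤ normalizedCut Z S) {s t : ℝ} (hs : ∀ i ∈ S, s ≤ v i) (ht : ∀ j ∉ S, v j ≤ t) :
    s - t ≤ n / (#S * #Sᶜ) / ρ := by
  obtain ⟨i, hi, j, hj, -⟩ := exists_pos_of_sum_cut_ne_zero hnonneg (hflow ▸ one_ne_zero)
  have hS : 0 < #S := card_pos.2 ⟨i, hi⟩
  have hSc : 0 < #Sᶜ := card_pos.2 ⟨j, hj⟩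
  set c := ∑ i ∈ S, ∑ j ∈ Sᶜ, Z i j
  have hρc : ρ * (#S * #Sᶜ) ≤ n * c := by
    rwa [normalizedCut_eq (Fin.pos i).ne', le_div_iff₀ (by positivity)] at hρS
  have hgap : (s - t) * c ≤ 1 := by
    rw [← hflow, mul_sum]
    refine sum_le_sum fun i hi => ?_
    rw [mul_sum]
    refine sum_le_sum fun j hj => ?_
    rw [mul_comm]
    exact mul_le_mul_of_nonneg_left (by linarith [hs i hi, ht j (mem_compl.1 hj)]) (hnonneg i j)
  rcases le_or_gt (s - t) 0 with hst | hst
  · exact hst.trans (by positivity)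
  rw [div_div, le_div_iff₀ (by positivity)]
  calc (s - t) * (#S * #Sᶜ * ρ) = (s - t) * (ρ * (#S * #Sᶜ)) := by ring
    _ ≤ (s - t) * (n * c) := mul_le_mul_of_nonneg_left hρc hst.le
    _ = n * ((s - t) * c) := by ring
    _ ≤ n := mul_le_of_le_one_right (Nat.cast_nonneg n) hgap

end NormalizedCut

theorem sum_Ico_div_sub_mul (n : ℕ) :
    ∑ k ∈ Ico 1 n, (n : ℝ) / ((n - k) * k) = 2 * ∑ k ∈ Ico 1 n, (1 : ℝ) / k := by
  have hsplit : ∀ k ∈ Ico 1 n, (n : ℝ) / ((n - k) * k) = 1 / ((n - k : ℕ) : ℝ) + 1 / k := by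
    intro k hk
    obtain ⟨hk1, hkn⟩ := mem_Ico.1 hk
    have h1 : (k : ℝ) ≠ 0 := by positivity
    have h2 : (n : ℝ) - k ≠ 0 := sub_ne_zero.2 (by exact_mod_cast hkn.ne')
    rw [Nat.cast_sub hkn.le]
    field_simp
    ring
  have hreflect := sum_Ico_reflect (fun k : ℕ => (1 : ℝ) / k) 1 (Nat.le_succ n)
  rw [Nat.add_sub_cancel_left, Nat.add_sub_cancel] at hreflect
  rw [sum_congr rfl hsplit, sum_add_distrib, two_mul, hreflect]

theorem sum_Ico_one_div_le_log (n : ℕ) : ∑ k ∈ Ico 1 n, (1 : ℝ) / k ≤ 3 / 2 * log n := by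
  induction n with
  | zero => simp
  | succ n ih =>
    rcases lt_trichotomy n 1 with h | rfl | h
    · obtain rfl : n = 0 := by omega
      simp
    · norm_num
      linarith [log_two_gt_d9]
    · rw [sum_Ico_succ_top (by omega)]
      have hn : (0 : ℝ) < n := by positivity
      -- `1 / n ≤ 3 / (2 * (n + 1)) ≤ 3 / 2 * log ((n + 1) / n)` for `n ≥ 2`
      have hlog : 1 / ((n : ℝ) + 1) ≤ log (n + 1) - log n := by
        have h := one_sub_inv_le_log_of_pos (x := ((n : ℝ) + 1) / n) (by positivity)
        rw [log_div (by positivity) hn.ne', inv_div] at h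
        convert h using 1
        field_simp
        ring
      have hn2 : (2 : ℝ) ≤ n := by exact_mod_cast h
      have : 1 / (n : ℝ) ≤ 3 / 2 * (1 / ((n : ℝ) + 1)) := by
        rw [div_le_iff₀ hn]
        field_simp
        linarith
      push_cast
      linarith

theorem stmt_14_general {n : ℕ}
    (Z : Matrix (Fin n) (Fin n) ℝ)
    (hsym : ∀ i j, Z i j = Z j i)
    (hnonneg : ∀ i j, 0 ≤ Z i j)
    (hrow : ∀ i, ∑ j, Z i j = 1)
    (hprim : ∃ k : ℕ, 0 < k ∧ ∀ a b, 0 < (Z ^ k) a b)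
    (a b : Fin n)
    -- ρ_ab : the minimum normalized relative cut value between a and b
    (ρab : ℝ)
    (hρab : IsLeast {r : ℝ | ∃ S : Finset (Fin n), a ∈ S ∧ b ∉ S ∧
      r = (∑ i ∈ S, ∑ j ∈ Sᶜ, (1 / (n : ℝ)) * Z i j) /
        (((S.card : ℝ) / n) * ((Sᶜ.card : ℝ) / n))} ρab) :
    mfp Z a b + mfp Z b a ≤ 3 * n * Real.log n / ρab := by
  have hZ : Z ∈ rowStochastic ℝ (Fin n) := mem_rowStochastic_iff_sum.2 ⟨hnonneg, hrow⟩
  have hZsym : Z.IsSymm := IsSymm.ext fun i j => hsym j i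
  obtain ⟨k, hk, hpos⟩ := hprim
  have hflow {S : Finset (Fin n)} (ha : a ∈ S) (hb : b ∉ S) :=
    sum_cut_fundY hZ hZsym hk hpos ha hb
  obtain ⟨⟨S₀, ha₀, hb₀, hρ₀⟩, hρle⟩ := hρab
  have hρ : 0 < ρab := by
    rw [hρ₀]
    exact normalizedCut_pos hnonneg (hflow ha₀ hb₀)
  have hf (k : ℕ) (hk : k ∈ Ico 1 n) : 0 ≤ (n : ℝ) / ((n - k) * k) / ρab := by
    have hkn : (k : ℝ) ≤ n := by exact_mod_cast (mem_Ico.1 hk).2.le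
    exact div_nonneg (div_nonneg n.cast_nonneg (mul_nonneg (sub_nonneg.2 hkn) k.cast_nonneg)) hρ.le
  have hpot := sub_le_sum_of_forall_sub_le (v := fun i => fundY Z i a - fundY Z i b) hf
    fun S s t ha hb hs ht => by
      have h := sub_le_of_le_normalizedCut hnonneg (hflow ha hb) hρ (hρle ⟨S, ha, hb, rfl⟩) hs ht
      rwa [cast_card_eq_sub_card_compl S] at h
  calc mfp Z a b + mfp Z b a
      = n * ((fundY Z a a - fundY Z a b) - (fundY Z b a - fundY Z b b)) := by
        unfold mfp
        ring
    _ ≤ n * ∑ k ∈ Ico 1 n, (n : ℝ) / ((n - k) * k) / ρab := by gcongr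
    _ = n * (2 * ∑ k ∈ Ico 1 n, (1 : ℝ) / k) / ρab := by
        rw [← sum_div, sum_Ico_div_sub_mul]
        ring
    _ ≤ n * (2 * (3 / 2 * log n)) / ρab := by
        gcongr
        exact sum_Ico_one_div_le_log n
    _ = 3 * n * log n / ρab := by ring

/-- Theorem 11: for a Markov chain with symmetric doubly stochastic primitive
transition matrix `Z` (uniform stationary distribution), the mean commute time
between distinct states `a` and `b` satisfies `m_ab + m_ba ≤ 3 n log n / ρ_ab`,
where `ρ_ab` is the minimum normalized relative cut value between `a` and `b`. -/
theorem stmt_14 {n : ℕ}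
    (Z : Matrix (Fin n) (Fin n) ℝ)
    (hsym : ∀ i j, Z i j = Z j i)
    (hnonneg : ∀ i j, 0 ≤ Z i j)
    (hrow : ∀ i, ∑ j, Z i j = 1)
    (hprim : ∃ k : ℕ, 0 < k ∧ ∀ a b, 0 < (Z ^ k) a b)
    (a b : Fin n) (hab : a ≠ b)
    -- ρ_ab : the minimum normalized relative cut value between a and b
    (ρab : ℝ)
    (hρab : IsLeast {r : ℝ | ∃ S : Finset (Fin n), a ∈ S ∧ b ∉ S ∧
      r = (∑ i ∈ S, ∑ j ∈ Sᶜ, (1 / (n : ℝ)) * Z i j) /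
        (((S.card : ℝ) / n) * ((Sᶜ.card : ℝ) / n))} ρab) :
    mfp Z a b + mfp Z b a ≤ 3 * n * Real.log n / ρab :=
  stmt_14_general Z hsym hnonneg hrow hprim a b ρab hρab
end
end

section
/- Let (N,A) be a connected weighted undirected graph with symmetric nonnegative edge weights w_ij and total edge weight w = Σ_{i,j} w_ij, and let m_ij denote the mean first passage times of the random walk on (N,A). Fix nodes a, b and a subset S ⊆ N containing a and b, and consider the subgraph of (N,A) with respect to S, assumed connected, with mean first passage times m̄_ij for the random walk on the subgraph. Then m_ab + m_ba ≤ (w/w(S)) (m̄_ab + m̄_ba), where w(S) = Σ_{i∈S} Σ_{j∈N} w_ij is the total edge weight of the subgraph. -/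
open Matrix

noncomputable section

/-- transition matrix of the random walk on a weighted undirected graph:
`Z_ij = w_ij / Σ_k w_ik`. -/
def walkZ {V : Type*} [Fintype V] (w : V → V → ℝ) : Matrix V V ℝ :=
  Matrix.of fun i j => w i j / ∑ k, w i k

/-- stationary distribution of the random walk: `π_i = (Σ_k w_ik)/w`, where
`w` is the total edge weight. -/
def statPi {V : Type*} [Fintype V] (w : V → V → ℝ) : V → ℝ :=
  fun i => (∑ k, w i k) / ∑ a, ∑ b, w a b

/-- the fundamental matrix `Y = Σ_{k=0}^∞ (Z^k − Z^∞)` of the random walk,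
where `Z^∞ = e πᵀ`. -/
def walkY {V : Type*} [Fintype V] [DecidableEq V] (w : V → V → ℝ) : Matrix V V ℝ :=
  Matrix.of fun i j => ∑' k : ℕ, ((walkZ w ^ k) i j - statPi w j)

/-- the mean first passage time `m_ij = (Y_jj − Y_ij)/π_j` from `i` to `j` of
the random walk on the weighted graph with weights `w`. -/
def walkM {V : Type*} [Fintype V] [DecidableEq V] (w : V → V → ℝ) (i j : V) : ℝ :=
  (walkY w j j - walkY w i j) / statPi w j

/-- `isPathOn E i j L` : there is a path of length `L` from `i` to `j` using
edges in `E`. -/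
def isPathOn {V : Type*} (E : V → V → Prop) (i j : V) (L : ℕ) : Prop :=
  ∃ f : ℕ → V, f 0 = i ∧ f L = j ∧ ∀ l < L, E (f l) (f (l + 1))

/-- the edge weights of the subgraph of a weighted graph with respect to a set
`S` of nodes: weights within `S` are kept, and for each `i ∈ S` the weights of
removed edges are folded into the self-loop weight. -/
def subW {n : ℕ} (w : Fin n → Fin n → ℝ) (S : Finset (Fin n)) :
    {x // x ∈ S} → {x // x ∈ S} → ℝ :=
  fun i j => if (i : Fin n) = (j : Fin n) then w i i + ∑ k ∈ Sᶜ, w i k else w i j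

/-!
For a reversible walk, `m_ab + m_ba = w · R(a, b)` with `R(a, b) = (e_a - e_b)ᵀ G (e_a - e_b)`,
where `G = Y D⁻¹` is a symmetric generalized inverse of the Laplacian `L = D - W`: this is the
identity `Y (I - Z) = I - Z^∞`, and the series `Y` converges by Doeblin's argument since `Z` is
primitive. By Dirichlet's principle `R(a, b) ≥ 2 (z_a - z_b) - zᵀ L z` for every potential `z`,
with equality at `z = G (e_a - e_b)`. Restricting the optimal potential of `(N, A)` to `S` cannot
increase its energy, since the subgraph keeps only edges inside `S` and self-loops carry no
energy; hence `R(a, b) ≤ R̄(a, b)`, and the subgraph has total weight `w(S)`.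
-/

lemma Matrix.abs_mul_apply_le {l m o : Type*} [Fintype m] {B : Matrix l m ℝ}
    {E : Matrix m o ℝ} {r c : ℝ} (hB : ∀ i k, 0 ≤ B i k) (hrow : ∀ i, ∑ k, B i k = r)
    (hE : ∀ k j, |E k j| ≤ c) (i : l) (j : o) : |(B * E) i j| ≤ r * c :=
  calc |(B * E) i j| ≤ ∑ k, |B i k * E k j| := Finset.abs_sum_le_sum_abs _ _
    _ ≤ ∑ k, B i k * c := Finset.sum_le_sum fun k _ => by
        rw [abs_mul, abs_of_nonneg (hB i k)]
        exact mul_le_mul_of_nonneg_left (hE k j) (hB i k)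
    _ = r * c := by rw [← Finset.sum_mul, hrow]

lemma Matrix.IsSymm.mul_pow_mul {n α : Type*} [Fintype n] [DecidableEq n] [CommSemiring α]
    {D W : Matrix n n α} (hD : D.IsSymm) (hW : W.IsSymm) (k : ℕ) :
    ((D * W) ^ k * D).IsSymm := by
  induction k with
  | zero => simpa using hD
  | succ k ih =>
    have h : (D * W) ^ (k + 1) * D = D * W * ((D * W) ^ k * D) := by
      rw [pow_succ', mul_assoc]
    rw [IsSymm, h, transpose_mul, ih.eq, transpose_mul, hD.eq, hW.eq]
    calc (D * W) ^ k * D * (W * D) = (D * W) ^ (k + 1) * D := by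
          simp only [pow_succ, mul_assoc]
      _ = D * W * ((D * W) ^ k * D) := h

lemma Matrix.PosSemidef.two_mul_dotProduct_sub_le {n : Type*} [Fintype n]
    {L : Matrix n n ℝ} (hL : L.PosSemidef) {x y : n → ℝ} (hy : L *ᵥ y = x) (z : n → ℝ) :
    2 * (x ⬝ᵥ z) - z ⬝ᵥ (L *ᵥ z) ≤ x ⬝ᵥ y := by
  have hLt : Lᵀ = L := by
    rw [← conjTranspose_eq_transpose_of_trivial]
    exact hL.1.eq
  have hyz : y ⬝ᵥ (L *ᵥ z) = x ⬝ᵥ z := by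
    rw [dotProduct_mulVec, ← hLt, vecMul_transpose, hy]
  have h := hL.dotProduct_mulVec_nonneg (y - z)
  rw [star_trivial, mulVec_sub, dotProduct_sub, sub_dotProduct, sub_dotProduct, hy, hyz,
    dotProduct_comm y x, dotProduct_comm z x] at h
  linarith

lemma summable_pow_div {r : ℝ} (h0 : 0 ≤ r) (h1 : r < 1) {k₀ : ℕ} (hk₀ : 0 < k₀) :
    Summable fun k : ℕ => r ^ (k / k₀) := by
  have : NeZero k₀ := ⟨hk₀.ne'⟩
  rw [← (Nat.divModEquiv k₀).symm.summable_iff]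
  convert (summable_geometric_of_lt_one h0 h1).mul_of_nonneg
    (Summable.of_finite (f := fun _ : Fin k₀ => (1 : ℝ))) (fun _ => pow_nonneg h0 _)
    (fun _ => zero_le_one) using 1
  ext ⟨m, j⟩
  simp [Nat.divModEquiv_symm_apply, Nat.add_div_of_dvd_right, Nat.div_eq_of_lt j.2, hk₀]

namespace RandomWalk

variable {V : Type*} [Fintype V]

def degree (w : V → V → ℝ) (i : V) : ℝ := ∑ k, w i k

def totalWeight (w : V → V → ℝ) : ℝ := ∑ i, ∑ j, w i j

/-- The limit `Z^∞ = e πᵀ` of the powers of `walkZ w`. -/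
def limitMatrix (w : V → V → ℝ) : Matrix V V ℝ := of fun _ j => statPi w j

def laplacian [DecidableEq V] (w : V → V → ℝ) : Matrix V V ℝ := diagonal (degree w) - of w

def invDegree [DecidableEq V] (w : V → V → ℝ) : Matrix V V ℝ :=
  diagonal fun i => (degree w i)⁻¹

/-- `Y D⁻¹`, a symmetric generalized inverse of the Laplacian `D - W`. -/
def green [DecidableEq V] (w : V → V → ℝ) : Matrix V V ℝ := walkY w * invDegree w

def IsPrimitive [DecidableEq V] (M : Matrix V V ℝ) : Prop :=
  ∃ k, 0 < k ∧ ∀ i j, 0 < (M ^ k) i j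

def effectiveResistance [DecidableEq V] (w : V → V → ℝ) (a b : V) : ℝ :=
  (Pi.single a 1 - Pi.single b 1) ⬝ᵥ (green w *ᵥ (Pi.single a 1 - Pi.single b 1))

variable {w : V → V → ℝ}

lemma walkZ_apply (w : V → V → ℝ) (i j : V) : walkZ w i j = w i j / degree w i := rfl

lemma statPi_apply (w : V → V → ℝ) (i : V) : statPi w i = degree w i / totalWeight w := rfl

lemma totalWeight_eq_sum_degree (w : V → V → ℝ) : totalWeight w = ∑ i, degree w i := rfl

lemma degree_nonneg (hw : ∀ i j, 0 ≤ w i j) (i : V) : 0 ≤ degree w i :=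
  Finset.sum_nonneg fun k _ => hw i k

lemma totalWeight_nonneg (hw : ∀ i j, 0 ≤ w i j) : 0 ≤ totalWeight w :=
  Finset.sum_nonneg fun i _ => degree_nonneg hw i

lemma statPi_nonneg (hw : ∀ i j, 0 ≤ w i j) (j : V) : 0 ≤ statPi w j :=
  div_nonneg (degree_nonneg hw j) (totalWeight_nonneg hw)

lemma statPi_le_one (hw : ∀ i j, 0 ≤ w i j) (j : V) : statPi w j ≤ 1 :=
  div_le_one_of_le₀ (Finset.single_le_sum (fun i _ => degree_nonneg hw i) (Finset.mem_univ j))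
    (totalWeight_nonneg hw)

lemma sum_statPi (hW : totalWeight w ≠ 0) : ∑ j, statPi w j = 1 := by
  simp only [statPi, ← Finset.sum_div]
  exact div_self hW

lemma sum_walkZ_apply (hdeg : ∀ i, degree w i ≠ 0) (i : V) : ∑ j, walkZ w i j = 1 := by
  simp only [walkZ_apply, ← Finset.sum_div]
  exact div_self (hdeg i)

lemma limitMatrix_mul_walkZ (hsym : ∀ i j, w i j = w j i) (hdeg : ∀ i, degree w i ≠ 0) :
    limitMatrix w * walkZ w = limitMatrix w := by
  ext i j
  have hterm : ∀ l, statPi w l * walkZ w l j = w j l / totalWeight w := fun l => by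
    rw [statPi_apply, walkZ_apply, hsym l j, div_mul_div_comm, mul_comm (totalWeight w),
      mul_div_mul_left _ _ (hdeg l)]
  simp only [limitMatrix, mul_apply, of_apply, hterm, ← Finset.sum_div]
  rfl

lemma limitMatrix_mul_self (hW : totalWeight w ≠ 0) :
    limitMatrix w * limitMatrix w = limitMatrix w := by
  ext i j
  simp [mul_apply, limitMatrix, ← Finset.sum_mul, sum_statPi hW]

section DecidableEq

variable [DecidableEq V]

lemma walkZ_eq_invDegree_mul (w : V → V → ℝ) : walkZ w = invDegree w * of w := by
  ext i j
  simp [walkZ, invDegree, degree, div_eq_inv_mul]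

lemma walkZ_pow_apply_nonneg (hw : ∀ i j, 0 ≤ w i j) (k : ℕ) (i j : V) :
    0 ≤ (walkZ w ^ k) i j := by
  induction k generalizing j with
  | zero => by_cases h : i = j <;> simp [one_apply, h]
  | succ k ih =>
    rw [pow_succ, mul_apply]
    exact Finset.sum_nonneg fun l _ =>
      mul_nonneg (ih l) (div_nonneg (hw l j) (degree_nonneg hw l))

lemma sum_walkZ_pow_apply (hdeg : ∀ i, degree w i ≠ 0) (k : ℕ) (i : V) :
    ∑ j, (walkZ w ^ k) i j = 1 := by
  induction k with
  | zero => simp [one_apply]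
  | succ k ih =>
    simp only [pow_succ, mul_apply]
    rw [Finset.sum_comm, ← ih]
    simp only [← Finset.mul_sum, sum_walkZ_apply hdeg, mul_one]

lemma walkZ_pow_apply_le_one (hw : ∀ i j, 0 ≤ w i j) (hdeg : ∀ i, degree w i ≠ 0) (k : ℕ)
    (i j : V) : (walkZ w ^ k) i j ≤ 1 :=
  sum_walkZ_pow_apply hdeg k i ▸
    Finset.single_le_sum (fun l _ => walkZ_pow_apply_nonneg hw k i l) (Finset.mem_univ j)

/-- A vertex of degree `0` has a zero row in `walkZ w` (as `x / 0 = 0`), which rules out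
primitivity. -/
lemma degree_pos (hw : ∀ i j, 0 ≤ w i j) (hprim : IsPrimitive (walkZ w)) (i : V) :
    0 < degree w i := by
  obtain ⟨k, hk, hpos⟩ := hprim
  refine (degree_nonneg hw i).lt_of_ne fun h => (hpos i i).ne' ?_
  obtain ⟨k, rfl⟩ := Nat.exists_eq_add_of_lt hk
  rw [pow_succ', mul_apply]
  refine Finset.sum_eq_zero fun l _ => ?_
  rw [walkZ_apply, ← h, div_zero, zero_mul]

lemma totalWeight_pos [Nonempty V] (hw : ∀ i j, 0 ≤ w i j) (hprim : IsPrimitive (walkZ w)) :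
    0 < totalWeight w :=
  Finset.sum_pos (fun i _ => degree_pos hw hprim i) Finset.univ_nonempty

lemma walkZ_pow_mul_limitMatrix (hdeg : ∀ i, degree w i ≠ 0) (k : ℕ) :
    walkZ w ^ k * limitMatrix w = limitMatrix w := by
  ext i j
  simp [mul_apply, limitMatrix, ← Finset.sum_mul, sum_walkZ_pow_apply hdeg]

lemma limitMatrix_mul_walkZ_pow (hsym : ∀ i j, w i j = w j i) (hdeg : ∀ i, degree w i ≠ 0)
    (k : ℕ) : limitMatrix w * walkZ w ^ k = limitMatrix w := by
  induction k with
  | zero => exact mul_one _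
  | succ k ih => rw [pow_succ, ← mul_assoc, ih, limitMatrix_mul_walkZ hsym hdeg]

/-- Doeblin's argument: if `Z^{k₀} ≥ ε` entrywise, then `Z^{k + k₀} - Z^∞ = B (Z^k - Z^∞)`
with `B = Z^{k₀} - ε Z^∞` nonnegative of row sums `1 - ε`. -/
lemma exists_abs_walkZ_pow_sub_limitMatrix_le [Nonempty V] (hsym : ∀ i j, w i j = w j i)
    (hw : ∀ i j, 0 ≤ w i j) (hprim : IsPrimitive (walkZ w)) :
    ∃ k₀ > 0, ∃ r, 0 ≤ r ∧ r < 1 ∧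
      ∀ k i j, |(walkZ w ^ k - limitMatrix w) i j| ≤ r ^ (k / k₀) := by
  have hdeg : ∀ i, degree w i ≠ 0 := fun i => (degree_pos hw hprim i).ne'
  have hW : totalWeight w ≠ 0 := (totalWeight_pos hw hprim).ne'
  obtain ⟨k₀, hk₀, hpos⟩ := hprim
  obtain ⟨⟨i₀, j₀⟩, hmin⟩ :=
    Finite.exists_min fun p : V × V => (walkZ w ^ k₀) p.1 p.2
  set ε := (walkZ w ^ k₀) i₀ j₀
  set B := walkZ w ^ k₀ - ε • limitMatrix w
  have hB : ∀ i l, 0 ≤ B i l := fun i l => by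
    have := mul_le_mul_of_nonneg_left (statPi_le_one hw l) (hpos i₀ j₀).le
    simp only [B, Matrix.sub_apply, Matrix.smul_apply, limitMatrix, of_apply, smul_eq_mul]
    linarith [hmin (i, l)]
  have hrow : ∀ i, ∑ l, B i l = 1 - ε := fun i => by
    simp [B, limitMatrix, Finset.sum_sub_distrib, ← Finset.mul_sum, sum_walkZ_pow_apply hdeg,
      sum_statPi hW]
  have hstep : ∀ k, walkZ w ^ (k + k₀) - limitMatrix w = B * (walkZ w ^ k - limitMatrix w) :=
    fun k => by
      simp only [B, sub_mul, mul_sub, smul_mul_assoc, ← pow_add, add_comm k₀,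
        walkZ_pow_mul_limitMatrix hdeg, limitMatrix_mul_walkZ_pow hsym hdeg,
        limitMatrix_mul_self hW]
      abel
  obtain ⟨i⟩ := ‹Nonempty V›
  refine ⟨k₀, hk₀, 1 - ε, hrow i ▸ Finset.sum_nonneg fun l _ => hB i l,
    by linarith [hpos i₀ j₀], fun k => ?_⟩
  induction k using Nat.strong_induction_on with
  | _ k ih =>
    intro i j
    rcases lt_or_ge k k₀ with hk | hk
    · rw [Nat.div_eq_of_lt hk, pow_zero]
      exact abs_sub_le_of_nonneg_of_le (walkZ_pow_apply_nonneg hw _ _ _)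
        (walkZ_pow_apply_le_one hw hdeg _ _ _) (statPi_nonneg hw _) (statPi_le_one hw _)
    · obtain ⟨m, rfl⟩ := Nat.exists_eq_add_of_le' hk
      rw [hstep, Nat.add_div_right m hk₀, pow_succ']
      exact abs_mul_apply_le hB hrow (ih m (by omega)) i j

lemma summable_walkZ_pow_sub_limitMatrix [Nonempty V] (hsym : ∀ i j, w i j = w j i)
    (hw : ∀ i j, 0 ≤ w i j) (hprim : IsPrimitive (walkZ w)) :
    Summable fun k => walkZ w ^ k - limitMatrix w := by
  obtain ⟨k₀, hk₀, r, h0, h1, hle⟩ := exists_abs_walkZ_pow_sub_limitMatrix_le hsym hw hprim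
  refine Pi.summable.2 fun i => Pi.summable.2 fun j => ?_
  exact (summable_pow_div h0 h1 hk₀).of_norm_bounded fun k => hle k i j

lemma walkY_eq_tsum (hs : Summable fun k => walkZ w ^ k - limitMatrix w) :
    walkY w = ∑' k, (walkZ w ^ k - limitMatrix w) := by
  ext i j
  exact (Pi.hasSum.1 (Pi.hasSum.1 hs.hasSum i) j).tsum_eq

lemma walkY_sub_walkY_mul_walkZ (hsym : ∀ i j, w i j = w j i) (hdeg : ∀ i, degree w i ≠ 0)
    (hs : Summable fun k => walkZ w ^ k - limitMatrix w) :
    walkY w - walkY w * walkZ w = 1 - limitMatrix w := by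
  have hshift : walkY w * walkZ w = ∑' k, (walkZ w ^ (k + 1) - limitMatrix w) := by
    rw [walkY_eq_tsum hs, ← hs.tsum_mul_right]
    refine tsum_congr fun k => ?_
    rw [sub_mul, ← pow_succ, limitMatrix_mul_walkZ hsym hdeg]
  rw [hshift, walkY_eq_tsum hs, hs.tsum_eq_zero_add, pow_zero]
  abel

lemma limitMatrix_mul_invDegree (hdeg : ∀ i, degree w i ≠ 0) :
    limitMatrix w * invDegree w = of fun _ _ => (totalWeight w)⁻¹ := by
  ext i j
  simp only [limitMatrix, invDegree, statPi_apply, mul_diagonal, of_apply]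
  rw [div_mul_eq_mul_div, mul_inv_cancel₀ (hdeg j), one_div]

lemma isSymm_green (hsym : ∀ i j, w i j = w j i) (hdeg : ∀ i, degree w i ≠ 0)
    (hs : Summable fun k => walkZ w ^ k - limitMatrix w) : (green w).IsSymm := by
  have hterm : ∀ k, ((walkZ w ^ k - limitMatrix w) * invDegree w).IsSymm := fun k => by
    rw [sub_mul, limitMatrix_mul_invDegree hdeg, walkZ_eq_invDegree_mul]
    exact ((isSymm_diagonal _).mul_pow_mul (IsSymm.ext fun i j => hsym j i) k).sub
      (IsSymm.ext fun _ _ => rfl)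
  rw [IsSymm, green, walkY_eq_tsum hs, ← hs.tsum_mul_right, transpose_tsum]
  exact tsum_congr fun k => (hterm k).eq

lemma isSymm_laplacian (hsym : ∀ i j, w i j = w j i) : (laplacian w).IsSymm :=
  (isSymm_diagonal _).sub (IsSymm.ext fun i j => hsym j i)

lemma green_mul_laplacian (hsym : ∀ i j, w i j = w j i) (hdeg : ∀ i, degree w i ≠ 0)
    (hs : Summable fun k => walkZ w ^ k - limitMatrix w) :
    green w * laplacian w = 1 - limitMatrix w := by
  have hinv : invDegree w * diagonal (degree w) = 1 := by
    rw [invDegree, diagonal_mul_diagonal, ← diagonal_one]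
    exact congrArg diagonal (funext fun i => inv_mul_cancel₀ (hdeg i))
  rw [green, laplacian, mul_sub, mul_assoc, hinv, mul_one, mul_assoc,
    ← walkZ_eq_invDegree_mul, walkY_sub_walkY_mul_walkZ hsym hdeg hs]

lemma laplacian_mulVec_green_mulVec (hsym : ∀ i j, w i j = w j i) (hdeg : ∀ i, degree w i ≠ 0)
    (hs : Summable fun k => walkZ w ^ k - limitMatrix w) {x : V → ℝ} (hx : ∑ i, x i = 0) :
    laplacian w *ᵥ (green w *ᵥ x) = x := by
  have hLG : laplacian w * green w = 1 - (limitMatrix w)ᵀ := by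
    rw [← (isSymm_laplacian hsym).eq, ← (isSymm_green hsym hdeg hs).eq, ← transpose_mul,
      green_mul_laplacian hsym hdeg hs, transpose_sub, transpose_one]
  have hlim : (limitMatrix w)ᵀ *ᵥ x = 0 := by
    ext i
    simp [mulVec, dotProduct, limitMatrix, ← Finset.mul_sum, hx]
  rw [mulVec_mulVec, hLG, sub_mulVec, one_mulVec, hlim, sub_zero]

lemma dotProduct_laplacian_mulVec (hsym : ∀ i j, w i j = w j i) (z : V → ℝ) :
    z ⬝ᵥ (laplacian w *ᵥ z) = (∑ i, ∑ j, w i j * (z i - z j) ^ 2) / 2 := by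
  have hrow : ∑ i, ∑ j, w i j * z i ^ 2 = ∑ i, degree w i * z i ^ 2 := by
    simp only [degree, Finset.sum_mul]
  have hcol : ∑ i, ∑ j, w i j * z j ^ 2 = ∑ i, degree w i * z i ^ 2 := by
    rw [Finset.sum_comm]
    simp only [degree, Finset.sum_mul, hsym]
  have hquad : z ⬝ᵥ (laplacian w *ᵥ z) =
      ∑ i, degree w i * z i ^ 2 - ∑ i, ∑ j, z i * (w i j * z j) := by
    rw [laplacian, sub_mulVec, dotProduct_sub]
    simp only [dotProduct, mulVec_diagonal]
    simp only [mulVec, dotProduct, of_apply, Finset.mul_sum]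
    congr 1
    exact Finset.sum_congr rfl fun i _ => by ring
  have hexp : ∀ i j, w i j * (z i - z j) ^ 2 =
      w i j * z i ^ 2 + w i j * z j ^ 2 - 2 * (z i * (w i j * z j)) := fun i j => by ring
  simp only [hexp, Finset.sum_add_distrib, Finset.sum_sub_distrib, ← Finset.mul_sum, hrow, hcol,
    hquad]
  ring

lemma posSemidef_laplacian (hsym : ∀ i j, w i j = w j i) (hw : ∀ i j, 0 ≤ w i j) :
    (laplacian w).PosSemidef := by
  refine .of_dotProduct_mulVec_nonneg ?_ fun z => ?_
  · rw [IsHermitian, conjTranspose_eq_transpose_of_trivial]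
    exact isSymm_laplacian hsym
  · rw [star_trivial, dotProduct_laplacian_mulVec hsym]
    exact div_nonneg (Finset.sum_nonneg fun i _ => Finset.sum_nonneg fun j _ =>
      mul_nonneg (hw i j) (sq_nonneg _)) zero_le_two

lemma laplacian_mulVec_green_mulVec_single_sub_single [Nonempty V] (hsym : ∀ i j, w i j = w j i)
    (hw : ∀ i j, 0 ≤ w i j) (hprim : IsPrimitive (walkZ w)) (a b : V) :
    laplacian w *ᵥ (green w *ᵥ (Pi.single a 1 - Pi.single b 1)) =
      Pi.single a 1 - Pi.single b 1 :=
  laplacian_mulVec_green_mulVec hsym (fun i => (degree_pos hw hprim i).ne')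
    (summable_walkZ_pow_sub_limitMatrix hsym hw hprim) (by simp [Finset.sum_sub_distrib])

lemma green_apply (w : V → V → ℝ) (i j : V) : green w i j = walkY w i j / degree w j := by
  simp [green, invDegree, mul_diagonal, div_eq_mul_inv]

lemma walkM_eq_mul_green_sub (w : V → V → ℝ) (i j : V) :
    walkM w i j = totalWeight w * (green w j j - green w i j) := by
  rw [walkM, statPi_apply, green_apply, green_apply, div_div_eq_mul_div, ← sub_div]
  ring

lemma walkM_add_walkM (w : V → V → ℝ) (a b : V) :
    walkM w a b + walkM w b a = totalWeight w * effectiveResistance w a b := by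
  simp only [walkM_eq_mul_green_sub, effectiveResistance, mulVec_sub, mulVec_single_one,
    dotProduct_sub, sub_dotProduct, single_one_dotProduct, col_apply]
  ring

end DecidableEq

section Subgraph

variable {n : ℕ} {w : Fin n → Fin n → ℝ} {S : Finset (Fin n)}

lemma subW_symm (hsym : ∀ i j, w i j = w j i) (u v : S) : subW w S u v = subW w S v u := by
  by_cases h : (u : Fin n) = v
  · rw [Subtype.ext h]
  · simp only [subW, if_neg h, if_neg (Ne.symm h), hsym]

lemma subW_nonneg (hw : ∀ i j, 0 ≤ w i j) (u v : S) : 0 ≤ subW w S u v := by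
  unfold subW
  split_ifs
  · exact add_nonneg (hw _ _) (Finset.sum_nonneg fun k _ => hw _ _)
  · exact hw _ _

lemma degree_subW (w : Fin n → Fin n → ℝ) (u : S) : degree (subW w S) u = degree w u := by
  have hsplit : ∀ v : S, subW w S u v = w u v + if u = v then ∑ k ∈ Sᶜ, w u k else 0 := by
    intro v
    by_cases h : u = v
    · subst h; simp [subW]
    · simp [subW, h]
  simp only [degree, hsplit, Finset.sum_add_distrib, Finset.sum_ite_eq, Finset.mem_univ, if_true]
  rw [Finset.sum_coe_sort S (w u), Finset.sum_add_sum_compl]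

lemma totalWeight_subW (w : Fin n → Fin n → ℝ) (S : Finset (Fin n)) :
    totalWeight (subW w S) = ∑ i ∈ S, ∑ j, w i j := by
  simp only [totalWeight_eq_sum_degree, degree_subW]
  exact Finset.sum_coe_sort S (degree w)

/-- Self-loops carry no energy, so the energy of the subgraph only counts edges inside `S`. -/
lemma sum_subW_mul_sq_le (hw : ∀ i j, 0 ≤ w i j) (z : Fin n → ℝ) :
    ∑ u : S, ∑ v : S, subW w S u v * (z u - z v) ^ 2 ≤ ∑ i, ∑ j, w i j * (z i - z j) ^ 2 := by
  have hterm : ∀ u v : S, subW w S u v * (z u - z v) ^ 2 = w u v * (z u - z v) ^ 2 := by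
    intro u v
    by_cases h : (u : Fin n) = v
    · simp [h]
    · simp [subW, h]
  have hnn : ∀ i j, 0 ≤ w i j * (z i - z j) ^ 2 := fun i j => mul_nonneg (hw i j) (sq_nonneg _)
  simp only [hterm]
  rw [Finset.sum_coe_sort S (fun i => ∑ v : S, w i v * (z i - z v) ^ 2)]
  calc ∑ i ∈ S, ∑ v : S, w i v * (z i - z v) ^ 2
      = ∑ i ∈ S, ∑ j ∈ S, w i j * (z i - z j) ^ 2 :=
        Finset.sum_congr rfl fun i _ => Finset.sum_coe_sort S (fun j => w i j * (z i - z j) ^ 2)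
    _ ≤ ∑ i ∈ S, ∑ j, w i j * (z i - z j) ^ 2 := Finset.sum_le_sum fun i _ =>
        Finset.sum_le_sum_of_subset_of_nonneg (Finset.subset_univ S) fun j _ _ => hnn i j
    _ ≤ ∑ i, ∑ j, w i j * (z i - z j) ^ 2 :=
        Finset.sum_le_sum_of_subset_of_nonneg (Finset.subset_univ S) fun i _ _ =>
          Finset.sum_nonneg fun j _ => hnn i j

/-- Rayleigh monotonicity: the restriction `z` to `S` of the optimal potential `y` has energy at
most `R(a, b)`, so Dirichlet's principle on the subgraph gives `R̄(a, b) ≥ 2 R(a, b) - R(a, b)`. -/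
lemma effectiveResistance_le_subW (hsym : ∀ i j, w i j = w j i) (hw : ∀ i j, 0 ≤ w i j)
    (hprim : IsPrimitive (walkZ w)) (hsubprim : IsPrimitive (walkZ (subW w S))) {a b : Fin n}
    (ha : a ∈ S) (hb : b ∈ S) :
    effectiveResistance w a b ≤ effectiveResistance (subW w S) ⟨a, ha⟩ ⟨b, hb⟩ := by
  have : Nonempty (Fin n) := ⟨a⟩
  have : Nonempty S := ⟨⟨a, ha⟩⟩
  unfold effectiveResistance
  set x : Fin n → ℝ := Pi.single a 1 - Pi.single b 1
  set y := green w *ᵥ x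
  set z : S → ℝ := fun u => y u
  have hLy : laplacian w *ᵥ y = x :=
    laplacian_mulVec_green_mulVec_single_sub_single hsym hw hprim a b
  have hxz : (Pi.single ⟨a, ha⟩ 1 - Pi.single ⟨b, hb⟩ 1) ⬝ᵥ z = x ⬝ᵥ y := by
    simp [x, z, sub_dotProduct]
  have henergy : z ⬝ᵥ (laplacian (subW w S) *ᵥ z) ≤ x ⬝ᵥ y := by
    rw [dotProduct_laplacian_mulVec (subW_symm hsym), ← hLy, dotProduct_comm,
      dotProduct_laplacian_mulVec hsym]
    exact div_le_div_of_nonneg_right (sum_subW_mul_sq_le hw y) zero_le_two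
  have hdirichlet := PosSemidef.two_mul_dotProduct_sub_le
    (posSemidef_laplacian (subW_symm hsym) (subW_nonneg hw))
    (laplacian_mulVec_green_mulVec_single_sub_single (subW_symm hsym) (subW_nonneg hw) hsubprim
      ⟨a, ha⟩ ⟨b, hb⟩) z
  linarith

end Subgraph

end RandomWalk

open RandomWalk in
theorem stmt_15_general {n : ℕ}
    (w : Fin n → Fin n → ℝ)
    (hsym : ∀ i j, w i j = w j i)
    (hnonneg : ∀ i j, 0 ≤ w i j)
    -- the random walk on the graph is irreducible and aperiodic (primitive)
    (hprim : ∃ k : ℕ, 0 < k ∧ ∀ i j, 0 < (walkZ w ^ k) i j)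
    (a b : Fin n) (S : Finset (Fin n)) (ha : a ∈ S) (hb : b ∈ S)
    -- the subgraph with respect to S is connected, and its random walk is
    -- irreducible and aperiodic (primitive)
    (hsubprim : ∃ k : ℕ, 0 < k ∧ ∀ u v : {x // x ∈ S}, 0 < (walkZ (subW w S) ^ k) u v) :
    walkM w a b + walkM w b a ≤
      ((∑ i, ∑ j, w i j) / (∑ i ∈ S, ∑ j, w i j)) *
        (walkM (subW w S) ⟨a, ha⟩ ⟨b, hb⟩ + walkM (subW w S) ⟨b, hb⟩ ⟨a, ha⟩) := by
  have : Nonempty S := ⟨⟨a, ha⟩⟩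
  have hwS : 0 < ∑ i ∈ S, ∑ j, w i j :=
    totalWeight_subW w S ▸ totalWeight_pos (subW_nonneg hnonneg) hsubprim
  calc walkM w a b + walkM w b a = totalWeight w * effectiveResistance w a b :=
        walkM_add_walkM w a b
    _ ≤ totalWeight w * effectiveResistance (subW w S) ⟨a, ha⟩ ⟨b, hb⟩ :=
        mul_le_mul_of_nonneg_left (effectiveResistance_le_subW hsym hnonneg hprim hsubprim ha hb)
          (totalWeight_nonneg hnonneg)
    _ = _ := by
        rw [walkM_add_walkM, totalWeight_subW, ← mul_assoc, div_mul_cancel₀ _ hwS.ne']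
        rfl

/-- Lemma 8: for a connected weighted undirected graph and a subset `S`
containing `a` and `b` whose induced subgraph (with folded self-loops) is
connected, the mean commute times satisfy
`m_ab + m_ba ≤ (w/w(S)) (m̄_ab + m̄_ba)`. -/
theorem stmt_15 {n : ℕ}
    (w : Fin n → Fin n → ℝ)
    (hsym : ∀ i j, w i j = w j i)
    (hnonneg : ∀ i j, 0 ≤ w i j)
    -- the graph is connected
    (hconn : ∀ i j : Fin n, ∃ L, isPathOn (fun a b => 0 < w a b) i j L)
    -- the random walk on the graph is irreducible and aperiodic (primitive)
    (hprim : ∃ k : ℕ, 0 < k ∧ ∀ i j, 0 < (walkZ w ^ k) i j)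
    (a b : Fin n) (S : Finset (Fin n)) (ha : a ∈ S) (hb : b ∈ S)
    -- the subgraph with respect to S is connected, and its random walk is
    -- irreducible and aperiodic (primitive)
    (hsubconn : ∀ u v : {x // x ∈ S}, ∃ L,
      isPathOn (fun c d : {x // x ∈ S} => 0 < subW w S c d) u v L)
    (hsubprim : ∃ k : ℕ, 0 < k ∧ ∀ u v : {x // x ∈ S}, 0 < (walkZ (subW w S) ^ k) u v) :
    walkM w a b + walkM w b a ≤
      ((∑ i, ∑ j, w i j) / (∑ i ∈ S, ∑ j, w i j)) *
        (walkM (subW w S) ⟨a, ha⟩ ⟨b, hb⟩ + walkM (subW w S) ⟨b, hb⟩ ⟨a, ha⟩) :=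
  stmt_15_general w hsym hnonneg hprim a b S ha hb hsubprim
end
end

section
/- Let T be a symmetric doubly stochastic primitive n×n matrix inducing the social network graph, and consider the Markov chain with transition matrix T. For distinct states a, b and any S ⊆ {1,…,n} containing a and b for which the subgraph with respect to S is connected, the mean commute time satisfies m_ab + m_ba ≤ 3 n log|S| / ρ_ab(S), where ρ_ab(S) = inf{ |S| · (Σ_{i∈S', j∈S∖S'} T_ij) / (|S'|·|S∖S'|) : S' ⊂ S, a ∈ S', b ∉ S' } is the minimum normalized cut value between a and b on the subgraph of the social network graph with respect to S. -/
/-!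
Write `φ i = Y i a - Y i b`. Since `T Y = Y - I + T^∞`, `φ` is the potential of the unit current
from `a` to `b` in the electrical network with conductances `T i j`, and
`m_ab + m_ba = n (φ a - φ b)`. For a level `t` between `φ b` and `φ a`, the unit current crosses the
cut between the `k` points of `S` above `t` and the rest of `S`, so the drop of `φ` across that cut
is at most the inverse of the cut weight, which the normalized cut bounds by
`(1/k + 1/(|S| - k)) / ρ`. Distinct levels give distinct `k`, so
`φ a - φ b ≤ 2 H_{|S|-1} / ρ ≤ 3 log |S| / ρ`.

The series defining `Y` converges geometrically: on vectors of sum zero, `T` does not increase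
the `ℓ²` norm and the positive matrix `T^κ` strictly contracts it.
-/

open Matrix

noncomputable section

open Finset

section Contraction

variable {ι : Type*} [Fintype ι]

theorem sum_sq_mulVec_le_of_sum_eq (B : Matrix ι ι ℝ) (hB : ∀ i j, 0 ≤ B i j) {s : ℝ}
    (hrow : ∀ i, ∑ j, B i j = s) (hcol : ∀ j, ∑ i, B i j = s) (y : ι → ℝ) :
    ∑ i, (B *ᵥ y) i ^ 2 ≤ s ^ 2 * ∑ i, y i ^ 2 := by
  have hcs : ∀ i, (B *ᵥ y) i ^ 2 ≤ s * ∑ j, B i j * y j ^ 2 := fun i => by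
    rw [← hrow i]
    exact sum_sq_le_sum_mul_sum_of_sq_le_mul _ (fun j _ => hB i j)
      (fun j _ => mul_nonneg (hB i j) (sq_nonneg _)) (fun j _ => le_of_eq (by ring))
  calc ∑ i, (B *ᵥ y) i ^ 2 ≤ ∑ i, s * ∑ j, B i j * y j ^ 2 := sum_le_sum fun i _ => hcs i
    _ = s ^ 2 * ∑ j, y j ^ 2 := by
      simp_rw [← mul_sum, sum_comm (γ := ι) (f := fun i j => B i j * y j ^ 2), ← sum_mul, hcol,
        ← mul_sum]
      ring

variable [DecidableEq ι]

/-- On vectors of sum zero, subtracting `ε` from every entry of `P` does not change `P *ᵥ v`;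
what remains is a nonnegative matrix with row and column sums `1 - |ι| ε`. -/
theorem sum_sq_mulVec_le_of_sum_eq_zero {P : Matrix ι ι ℝ} (hP : P ∈ doublyStochastic ℝ ι)
    {ε : ℝ} (hε : ∀ i j, ε ≤ P i j) {v : ι → ℝ} (hv : ∑ i, v i = 0) :
    ∑ i, (P *ᵥ v) i ^ 2 ≤ (1 - Fintype.card ι * ε) ^ 2 * ∑ i, v i ^ 2 := by
  have hPv : P *ᵥ v = (P - Matrix.of fun _ _ => ε) *ᵥ v := by
    ext i
    simp only [mulVec, dotProduct, Matrix.sub_apply, of_apply, sub_mul, sum_sub_distrib,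
      ← mul_sum, hv, mul_zero, sub_zero]
  rw [hPv]
  refine sum_sq_mulVec_le_of_sum_eq _ (fun i j => sub_nonneg.2 (hε i j)) (fun i => ?_)
    (fun j => ?_) v
  · simp [sum_sub_distrib, sum_row_of_mem_doublyStochastic hP]
  · simp [sum_sub_distrib, sum_col_of_mem_doublyStochastic hP]

end Contraction

theorem summable_of_add_le_mul {f : ℕ → ℝ} (hf : ∀ m, 0 ≤ f m) {c : ℝ} (hc : c < 1) (κ : ℕ)
    (hstep : ∀ m, f (m + κ) ≤ c * f m) : Summable f := by
  refine summable_of_sum_range_le hf (c := (∑ m ∈ range κ, f m) / (1 - c)) fun M => ?_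
  have hmono : ∑ m ∈ range M, f m ≤ ∑ m ∈ range (κ + M), f m :=
    sum_le_sum_of_subset_of_nonneg (range_mono (by omega)) fun m _ _ => hf m
  have hshift : ∑ m ∈ range M, f (κ + m) ≤ c * ∑ m ∈ range M, f m := by
    rw [mul_sum]
    exact sum_le_sum fun m _ => add_comm κ m ▸ hstep m
  rw [sum_range_add] at hmono
  rw [le_div_iff₀ (sub_pos.2 hc)]
  linarith

theorem summable_pow_mulVec {ι : Type*} [Fintype ι] [DecidableEq ι] {T : Matrix ι ι ℝ}
    (hT : T ∈ doublyStochastic ℝ ι) {κ : ℕ} (hκ : ∀ i j, 0 < (T ^ κ) i j) {u : ι → ℝ}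
    (hu : ∑ i, u i = 0) (i : ι) : Summable fun m => (T ^ m *ᵥ u) i := by
  have : Nonempty ι := ⟨i⟩
  obtain ⟨p, hp⟩ := Finite.exists_min fun p : ι × ι => (T ^ κ) p.1 p.2
  set ε := (T ^ κ) p.1 p.2
  have hTκ := pow_mem hT κ
  have hθ0 : 0 ≤ 1 - Fintype.card ι * ε := by
    have := card_nsmul_le_sum univ (fun j => (T ^ κ) p.1 j) ε fun j _ => hp (p.1, j)
    rw [sum_row_of_mem_doublyStochastic hTκ, nsmul_eq_mul, card_univ] at this
    linarith
  have hθ1 : 1 - Fintype.card ι * ε < 1 := by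
    have : (0 : ℝ) < Fintype.card ι := by exact_mod_cast Fintype.card_pos_iff.2 ⟨i⟩
    nlinarith [hκ p.1 p.2]
  set w := fun m => T ^ m *ᵥ u
  have hw : ∀ m, ∑ i, w m i = 0 := fun m => by
    rw [sum_mulVec_of_mem_doublyStochastic (pow_mem hT m), hu]
  have hstep : ∀ m, w (m + κ) = T ^ κ *ᵥ w m := fun m => by
    simp only [w, mulVec_mulVec, ← pow_add, add_comm]
  refine Summable.of_norm_bounded (g := fun m => √(∑ i, w m i ^ 2))
    (summable_of_add_le_mul (fun m => Real.sqrt_nonneg _) hθ1 κ fun m => ?_)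
    fun m => Real.abs_le_sqrt (single_le_sum (fun j _ => sq_nonneg (w m j)) (mem_univ i))
  rw [hstep, ← Real.sqrt_sq hθ0, ← Real.sqrt_mul (sq_nonneg _)]
  exact Real.sqrt_le_sqrt (sum_sq_mulVec_le_of_sum_eq_zero hTκ (fun i j => hp (i, j)) (hw m))

theorem sum_sum_compl_mul_sub_eq {ι : Type*} [Fintype ι] [DecidableEq ι] {T : Matrix ι ι ℝ}
    (hsym : ∀ i j, T i j = T j i) (hrow : ∀ i, ∑ j, T i j = 1) (φ : ι → ℝ) (A : Finset ι) :
    ∑ i ∈ A, ∑ k ∈ Aᶜ, T i k * (φ i - φ k) = ∑ i ∈ A, (φ i - ∑ k, T i k * φ k) := by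
  have hswap : ∑ i ∈ A, ∑ k ∈ A, T i k * φ k = ∑ i ∈ A, ∑ k ∈ A, T i k * φ i := by
    rw [sum_comm]
    exact sum_congr rfl fun _ _ => sum_congr rfl fun _ _ => by rw [hsym]
  have hinner : ∑ i ∈ A, ∑ k ∈ A, T i k * (φ i - φ k) = 0 := by
    simp only [mul_sub, sum_sub_distrib, hswap, sub_self]
  calc ∑ i ∈ A, ∑ k ∈ Aᶜ, T i k * (φ i - φ k) = ∑ i ∈ A, ∑ k, T i k * (φ i - φ k) := by
        simp only [← sum_add_sum_compl A, sum_add_distrib, hinner, zero_add]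
    _ = ∑ i ∈ A, (φ i - ∑ k, T i k * φ k) := by
        simp only [mul_sub, sum_sub_distrib, ← sum_mul, hrow, one_mul]

theorem mul_sum_sum_sdiff_le {ι : Type*} [Fintype ι] [DecidableEq ι] {T : Matrix ι ι ℝ}
    (hT : ∀ i j, 0 ≤ T i j) (φ : ι → ℝ) (S : Finset ι) {t x : ℝ}
    (hx : ∀ i ∈ S, t < φ i → x ≤ φ i) :
    (x - t) * ∑ i ∈ S with t < φ i, ∑ j ∈ S \ {j ∈ S | t < φ j}, T i j ≤
      ∑ i with t < φ i, ∑ k ∈ ({k | t < φ k} : Finset ι)ᶜ, T i k * (φ i - φ k) := by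
  set U := {i ∈ S | t < φ i}
  set A : Finset ι := {i | t < φ i}
  have hUA : U ⊆ A := fun i hi => mem_filter.2 ⟨mem_univ i, (mem_filter.1 hi).2⟩
  have hSUA : S \ U ⊆ Aᶜ := fun j hj => by
    simp only [U, A, mem_sdiff, mem_filter, mem_compl, mem_univ, true_and] at hj ⊢
    exact fun h => hj.2 ⟨hj.1, h⟩
  have hflow : ∀ i ∈ A, ∀ k ∈ Aᶜ, 0 ≤ T i k * (φ i - φ k) := fun i hi k hk => by
    simp only [A, mem_compl, mem_filter, mem_univ, true_and] at hi hk
    exact mul_nonneg (hT i k) (by linarith)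
  calc (x - t) * ∑ i ∈ U, ∑ j ∈ S \ U, T i j ≤ ∑ i ∈ U, ∑ j ∈ S \ U, T i j * (φ i - φ j) := by
        simp only [mul_sum]
        refine sum_le_sum fun i hi => sum_le_sum fun j hj => ?_
        have hxi := hx i (mem_filter.1 hi).1 (mem_filter.1 hi).2
        obtain ⟨hjS, hjU⟩ := mem_sdiff.1 hj
        have hjt : φ j ≤ t := not_lt.1 fun h => hjU (mem_filter.2 ⟨hjS, h⟩)
        nlinarith [hT i j]
    _ ≤ ∑ i ∈ U, ∑ k ∈ Aᶜ, T i k * (φ i - φ k) :=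
        sum_le_sum fun i hi =>
          sum_le_sum_of_subset_of_nonneg hSUA fun k hk _ => hflow i (hUA hi) k hk
    _ ≤ ∑ i ∈ A, ∑ k ∈ Aᶜ, T i k * (φ i - φ k) :=
        sum_le_sum_of_subset_of_nonneg hUA fun i hi _ => sum_nonneg fun k hk => hflow i hi k hk

theorem isPathOn.exists_crossing {V : Type*} {E : V → V → Prop} {u v : V} {L : ℕ}
    (h : isPathOn E u v L) {P : V → Prop} (hu : P u) (hv : ¬ P v) :
    ∃ c d, P c ∧ ¬ P d ∧ E c d := by
  obtain ⟨f, rfl, rfl, hE⟩ := h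
  by_contra! hno
  have hP : ∀ l ≤ L, P (f l) := by
    intro l
    induction l with
    | zero => exact fun _ => hu
    | succ l ih => exact fun hl => by_contra fun hPl => hno _ _ (ih (by omega)) hPl (hE l hl)
  exact hv (hP L le_rfl)

theorem sum_sum_sdiff_pos_of_isPathOn {n : ℕ} {T : Matrix (Fin n) (Fin n) ℝ}
    (hT : ∀ i j, 0 ≤ T i j) {S S' : Finset (Fin n)} {a b : Fin n} (ha : a ∈ S) (hb : b ∈ S)
    {L : ℕ} (hpath : isPathOn (fun c d : {x // x ∈ S} => 0 < subW (fun i j => T i j) S c d)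
      ⟨a, ha⟩ ⟨b, hb⟩ L)
    (haS' : a ∈ S') (hbS' : b ∉ S') : 0 < ∑ i ∈ S', ∑ j ∈ S \ S', T i j := by
  obtain ⟨c, d, hc, hd, hcd⟩ :=
    hpath.exists_crossing (P := fun c : {x // x ∈ S} => (c : Fin n) ∈ S') haS' hbS'
  have hne : (c : Fin n) ≠ d := fun h => hd (h ▸ hc)
  rw [subW, if_neg hne] at hcd
  calc 0 < T c d := hcd
    _ ≤ ∑ j ∈ S \ S', T c j := single_le_sum (fun j _ => hT c j) (mem_sdiff.2 ⟨d.2, hd⟩)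
    _ ≤ ∑ i ∈ S', ∑ j ∈ S \ S', T i j :=
        single_le_sum (f := fun i => ∑ j ∈ S \ S', T i j)
          (fun i _ => sum_nonneg fun j _ => hT i j) hc

/-- Induction on the number of points of `S` strictly above the level `φ i`: the gap below the
lowest of those points is bounded by `g` of their number, and these numbers strictly decrease. -/
theorem sub_le_sum_Ico_of_gap_le {ι : Type*} (S : Finset ι) (φ : ι → ℝ) (g : ℕ → ℝ) {a b : ι}
    (ha : a ∈ S) (hb : b ∈ S) (hg : ∀ k ∈ Ico 1 #S, 0 ≤ g k)
    (hgap : ∀ t x, φ b ≤ t → t < φ a → (∀ i ∈ S, t < φ i → x ≤ φ i) →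
      x - t ≤ g #{i ∈ S | t < φ i}) :
    φ a - φ b ≤ ∑ k ∈ Ico 1 #S, g k := by
  have hsum_mono : ∀ M N, M ≤ N → N ≤ #S → ∑ k ∈ Ico 1 M, g k ≤ ∑ k ∈ Ico 1 N, g k :=
    fun M N hMN hN => sum_le_sum_of_subset_of_nonneg (Ico_subset_Ico_right hMN)
      fun k hk _ => hg k (Ico_subset_Ico_right hN hk)
  have hlevel : ∀ i ∈ S, φ b ≤ φ i → #{j ∈ S | φ i < φ j} < #S := fun i _ hbi =>
    card_lt_card (filter_ssubset.2 ⟨b, hb, not_lt.2 hbi⟩)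
  have key : ∀ N, ∀ i ∈ S, φ b ≤ φ i → #{j ∈ S | φ i < φ j} = N →
      φ a - φ i ≤ ∑ k ∈ Ico 1 (N + 1), g k := by
    intro N
    induction N using Nat.strong_induction_on with
    | _ N ih =>
    intro i hi hbi hN
    have hNS : N + 1 ≤ #S := hN ▸ hlevel i hi hbi
    by_cases hai : φ a ≤ φ i
    · exact (sub_nonpos.2 hai).trans (hsum_mono 0 _ (Nat.zero_le _) hNS)
    rw [not_le] at hai
    set U := {j ∈ S | φ i < φ j}
    obtain ⟨i', hi'U, hmin⟩ := U.exists_min_image φ ⟨a, mem_filter.2 ⟨ha, hai⟩⟩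
    obtain ⟨hi'S, hii'⟩ := mem_filter.1 hi'U
    have hlt : #{j ∈ S | φ i' < φ j} < N := hN ▸ card_lt_card ⟨
      fun j hj => mem_filter.2 ⟨(mem_filter.1 hj).1, hii'.trans (mem_filter.1 hj).2⟩,
      fun h => lt_irrefl _ (mem_filter.1 (h hi'U)).2⟩
    have hupper := ih _ hlt i' hi'S (hbi.trans hii'.le) rfl
    have hstep : φ i' - φ i ≤ g N :=
      hN ▸ hgap (φ i) (φ i') hbi hai fun j hj hij => hmin j (mem_filter.2 ⟨hj, hij⟩)
    have hN1 : 1 ≤ N := by omega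
    rw [sum_Ico_succ_top hN1]
    linarith [hsum_mono _ N hlt (by omega)]
  calc φ a - φ b ≤ ∑ k ∈ Ico 1 (#{j ∈ S | φ b < φ j} + 1), g k := key _ b hb le_rfl rfl
    _ ≤ ∑ k ∈ Ico 1 #S, g k := hsum_mono _ _ (hlevel b hb le_rfl) le_rfl

/-- Each term is at most `3/2 log (1 + 1/k)`, since `2x/(x + 2) ≥ 2x/3` for `x ≤ 1`. -/
theorem sum_Ico_inv_le_log (m : ℕ) : ∑ k ∈ Ico 1 m, (k : ℝ)⁻¹ ≤ 3 / 2 * Real.log m := by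
  induction m with
  | zero => simp
  | succ m ih =>
    rcases Nat.eq_zero_or_pos m with rfl | hm
    · simp
    have hm' : (0 : ℝ) < m := by exact_mod_cast hm
    have hlog : Real.log (m + 1 : ℕ) = Real.log m + Real.log (1 + (m : ℝ)⁻¹) := by
      rw [← Real.log_mul hm'.ne' (by positivity)]
      push_cast
      field_simp
    have hinv : (m : ℝ)⁻¹ ≤ 1 := inv_le_one_of_one_le₀ (by exact_mod_cast hm)
    have hterm : 2 / 3 * (m : ℝ)⁻¹ ≤ 2 * (m : ℝ)⁻¹ / ((m : ℝ)⁻¹ + 2) := by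
      rw [le_div_iff₀ (by positivity)]
      nlinarith [inv_nonneg.2 hm'.le]
    rw [sum_Ico_succ_top hm, hlog]
    linarith [Real.le_log_one_add_of_nonneg (inv_nonneg.2 hm'.le)]

theorem sum_Ico_inv_sub (m : ℕ) :
    ∑ k ∈ Ico 1 m, ((m : ℝ) - k)⁻¹ = ∑ k ∈ Ico 1 m, (k : ℝ)⁻¹ := by
  have h := sum_Ico_reflect (fun k : ℕ => (k : ℝ)⁻¹) 1 (m := m) (n := m) (by omega)
  rw [Nat.add_sub_cancel, Nat.add_sub_cancel_left] at h
  rw [← h]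
  exact sum_congr rfl fun k hk => by rw [Nat.cast_sub (mem_Ico.1 hk).2.le]

/-- The potential of the unit current from `a` to `b` in the electrical network with
conductances `T i j`. -/
def voltage {n : ℕ} (T : Matrix (Fin n) (Fin n) ℝ) (a b i : Fin n) : ℝ :=
  fundY T i a - fundY T i b

section FundamentalMatrix

variable {n : ℕ} {T : Matrix (Fin n) (Fin n) ℝ} {κ : ℕ}

theorem summable_pow_apply_sub_s16 (hT : T ∈ doublyStochastic ℝ (Fin n))
    (hκ : ∀ i j, 0 < (T ^ κ) i j) (i j : Fin n) : Summable fun m => (T ^ m) i j - 1 / n := by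
  have hn : (n : ℝ) ≠ 0 := by exact_mod_cast (Fin.pos j).ne'
  set u : Fin n → ℝ := Pi.single j (1 : ℝ) - fun _ => 1 / (n : ℝ)
  have hu : ∑ k, u k = 0 := by simp [u, hn]
  refine (summable_pow_mulVec hT hκ hu i).congr fun m => ?_
  simp only [u, mulVec_sub, mulVec_single_one, Pi.sub_apply, col_apply]
  simp [mulVec, dotProduct, ← sum_mul, sum_row_of_mem_doublyStochastic (pow_mem hT m)]

theorem sum_mul_fundY (hT : T ∈ doublyStochastic ℝ (Fin n)) (hκ : ∀ i j, 0 < (T ^ κ) i j)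
    (i j : Fin n) :
    ∑ k, T i k * fundY T k j = fundY T i j - (if i = j then 1 else 0) + 1 / n := by
  have hsum := summable_pow_apply_sub_s16 hT hκ
  calc ∑ k, T i k * fundY T k j = ∑' m, ∑ k, T i k * ((T ^ m) k j - 1 / n) := by
        simp_rw [fundY, of_apply, ← tsum_mul_left]
        exact (Summable.tsum_finsetSum fun k _ => (hsum k j).mul_left _).symm
    _ = ∑' m, ((T ^ (m + 1)) i j - 1 / n) := tsum_congr fun m => by
        simp [pow_succ', mul_apply, mul_sub, sum_sub_distrib, ← sum_mul,
          sum_row_of_mem_doublyStochastic hT]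
    _ = fundY T i j - (if i = j then 1 else 0) + 1 / n := by
        rw [fundY, of_apply, (hsum i j).tsum_eq_zero_add, pow_zero, one_apply]
        ring

theorem mfp_add_mfp (a b : Fin n) :
    mfp T a b + mfp T b a = n * (voltage T a b a - voltage T a b b) := by
  simp only [mfp, voltage]
  ring

theorem voltage_sub_sum_mul_voltage (hT : T ∈ doublyStochastic ℝ (Fin n))
    (hκ : ∀ i j, 0 < (T ^ κ) i j) (a b i : Fin n) :
    voltage T a b i - ∑ k, T i k * voltage T a b k =
      (if i = a then 1 else 0) - (if i = b then 1 else 0) := by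
  simp only [voltage, mul_sub, sum_sub_distrib, sum_mul_fundY hT hκ]
  ring

theorem sum_sum_compl_mul_voltage_sub (hT : T ∈ doublyStochastic ℝ (Fin n))
    (hsym : ∀ i j, T i j = T j i) (hκ : ∀ i j, 0 < (T ^ κ) i j) {a b : Fin n}
    {A : Finset (Fin n)} (ha : a ∈ A) (hb : b ∉ A) :
    ∑ i ∈ A, ∑ k ∈ Aᶜ, T i k * (voltage T a b i - voltage T a b k) = 1 := by
  rw [sum_sum_compl_mul_sub_eq hsym (sum_row_of_mem_doublyStochastic hT),
    sum_congr rfl fun i _ => voltage_sub_sum_mul_voltage hT hκ a b i]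
  simp [sum_sub_distrib, ha, hb]

theorem voltage_sub_le_sum (hT : T ∈ doublyStochastic ℝ (Fin n)) (hsym : ∀ i j, T i j = T j i)
    (hκ : ∀ i j, 0 < (T ^ κ) i j) {a b : Fin n} {S : Finset (Fin n)} (ha : a ∈ S) (hb : b ∈ S)
    {ρ : ℝ} (hρ : 0 < ρ)
    (hcut : ∀ S' ⊆ S, a ∈ S' → b ∉ S' →
      ρ * (#S' * #(S \ S')) ≤ #S * ∑ i ∈ S', ∑ j ∈ S \ S', T i j) :
    voltage T a b a - voltage T a b b ≤ ∑ k ∈ Ico 1 #S, ((k : ℝ)⁻¹ + ((#S : ℝ) - k)⁻¹) / ρ := by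
  refine sub_le_sum_Ico_of_gap_le S (voltage T a b) _ ha hb (fun k hk => ?_)
    fun t x hbt hta hx => ?_
  · have hk0 : (0 : ℝ) < k := by exact_mod_cast (mem_Ico.1 hk).1
    have hkS : (k : ℝ) < #S := by exact_mod_cast (mem_Ico.1 hk).2
    have : 0 < (#S : ℝ) - k := by linarith
    positivity
  set U := {i ∈ S | t < voltage T a b i}
  set c := ∑ i ∈ U, ∑ j ∈ S \ U, T i j
  have haU : a ∈ U := mem_filter.2 ⟨ha, hta⟩
  have hbU : b ∈ S \ U := mem_sdiff.2 ⟨hb, fun h => (mem_filter.1 h).2.not_ge hbt⟩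
  have hflow : (x - t) * c ≤ 1 :=
    (mul_sum_sum_sdiff_le (fun i j => nonneg_of_mem_doublyStochastic hT) _ S hx).trans_eq
      (sum_sum_compl_mul_voltage_sub hT hsym hκ (by simpa using hta) (by simpa using hbt))
  have hρc := hcut U (filter_subset _ _) haU (mem_sdiff.1 hbU).2
  have hsub : (#S : ℝ) - #U = #(S \ U) := by
    rw [card_sdiff_of_subset (filter_subset _ _), Nat.cast_sub (card_le_card (filter_subset _ _))]
  have hU : (0 : ℝ) < #U := by exact_mod_cast card_pos.2 ⟨a, haU⟩
  have hSU : (0 : ℝ) < #(S \ U) := by exact_mod_cast card_pos.2 ⟨b, hbU⟩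
  rw [← sub_add_cancel (#S : ℝ) #U, hsub] at hρc
  rw [hsub, show ((#U : ℝ)⁻¹ + (#(S \ U) : ℝ)⁻¹) / ρ = (#U + #(S \ U)) / (ρ * (#U * #(S \ U))) by
    field_simp; ring, le_div_iff₀ (by positivity)]
  rcases le_or_gt (x - t) 0 with hxt | hxt
  · nlinarith [mul_pos hρ (mul_pos hU hSU)]
  · nlinarith [mul_le_mul_of_nonneg_left hρc hxt.le]

end FundamentalMatrix

theorem stmt_16_general {n : ℕ}
    (T : Matrix (Fin n) (Fin n) ℝ)
    (hsym : ∀ i j, T i j = T j i)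
    (hnonneg : ∀ i j, 0 ≤ T i j)
    (hrow : ∀ i, ∑ j, T i j = 1)
    (hprim : ∃ k : ℕ, 0 < k ∧ ∀ a b, 0 < (T ^ k) a b)
    (a b : Fin n) (S : Finset (Fin n)) (ha : a ∈ S) (hb : b ∈ S)
    -- the subgraph with respect to S is connected
    (hsubconn : ∀ u v : {x // x ∈ S}, ∃ L,
      isPathOn (fun c d : {x // x ∈ S} =>
        0 < subW (fun i j => T i j) S c d) u v L)
    -- ρ_ab(S) : the minimum normalized cut value between a and b on the subgraph
    (ρS : ℝ)
    (hρS : IsLeast {r : ℝ | ∃ S' : Finset (Fin n), S' ⊆ S ∧ a ∈ S' ∧ b ∉ S' ∧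
      r = (S.card : ℝ) * (∑ i ∈ S', ∑ j ∈ S \ S', T i j) /
        ((S'.card : ℝ) * ((S \ S').card : ℝ))} ρS) :
    mfp T a b + mfp T b a ≤ 3 * n * Real.log S.card / ρS := by
  obtain ⟨κ, -, hκ⟩ := hprim
  have hT : T ∈ doublyStochastic ℝ (Fin n) :=
    mem_doublyStochastic_iff_sum.2 ⟨hnonneg, hrow, fun j => by simpa only [hsym _ j] using hrow j⟩
  have hsplit : ∀ S' : Finset (Fin n), a ∈ S' → b ∉ S' → (0 : ℝ) < #S' * #(S \ S') :=
    fun S' haS' hbS' => by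
      have := card_pos.2 ⟨a, haS'⟩
      have := card_pos.2 ⟨b, mem_sdiff.2 ⟨hb, hbS'⟩⟩
      positivity
  have hρ : 0 < ρS := by
    obtain ⟨S₀, -, haS₀, hbS₀, rfl⟩ := hρS.1
    obtain ⟨L, hpath⟩ := hsubconn ⟨a, ha⟩ ⟨b, hb⟩
    have := sum_sum_sdiff_pos_of_isPathOn hnonneg ha hb hpath haS₀ hbS₀
    have := hsplit S₀ haS₀ hbS₀
    have := card_pos.2 ⟨a, ha⟩
    positivity
  have hcut : ∀ S' ⊆ S, a ∈ S' → b ∉ S' →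
      ρS * (#S' * #(S \ S')) ≤ #S * ∑ i ∈ S', ∑ j ∈ S \ S', T i j :=
    fun S' hS' haS' hbS' => (le_div_iff₀ (hsplit S' haS' hbS')).1 (hρS.2 ⟨S', hS', haS', hbS', rfl⟩)
  calc mfp T a b + mfp T b a = n * (voltage T a b a - voltage T a b b) := mfp_add_mfp a b
    _ ≤ n * ∑ k ∈ Ico 1 #S, ((k : ℝ)⁻¹ + ((#S : ℝ) - k)⁻¹) / ρS := by
        gcongr
        exact voltage_sub_le_sum hT hsym hκ ha hb hρ hcut
    _ = n * (2 * ∑ k ∈ Ico 1 #S, (k : ℝ)⁻¹) / ρS := by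
        rw [← sum_div, sum_add_distrib, sum_Ico_inv_sub]
        ring
    _ ≤ 3 * n * Real.log S.card / ρS := by
        rw [div_le_div_iff_of_pos_right hρ]
        nlinarith [sum_Ico_inv_le_log #S, Nat.cast_nonneg (α := ℝ) n]

/-- Theorem 12: for the Markov chain with symmetric doubly stochastic primitive
transition matrix `T` and any `S` containing `a` and `b` whose subgraph is
connected, `m_ab + m_ba ≤ 3 n log|S| / ρ_ab(S)`, where `ρ_ab(S)` is the minimum
normalized cut value between `a` and `b` on the subgraph with respect to `S`. -/
theorem stmt_16 {n : ℕ}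
    (T : Matrix (Fin n) (Fin n) ℝ)
    (hsym : ∀ i j, T i j = T j i)
    (hnonneg : ∀ i j, 0 ≤ T i j)
    (hrow : ∀ i, ∑ j, T i j = 1)
    (hprim : ∃ k : ℕ, 0 < k ∧ ∀ a b, 0 < (T ^ k) a b)
    (a b : Fin n) (hab : a ≠ b) (S : Finset (Fin n)) (ha : a ∈ S) (hb : b ∈ S)
    -- the subgraph with respect to S is connected
    (hsubconn : ∀ u v : {x // x ∈ S}, ∃ L,
      isPathOn (fun c d : {x // x ∈ S} =>
        0 < subW (fun i j => T i j) S c d) u v L)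
    -- ρ_ab(S) : the minimum normalized cut value between a and b on the subgraph
    (ρS : ℝ)
    (hρS : IsLeast {r : ℝ | ∃ S' : Finset (Fin n), S' ⊆ S ∧ a ∈ S' ∧ b ∉ S' ∧
      r = (S.card : ℝ) * (∑ i ∈ S', ∑ j ∈ S \ S', T i j) /
        ((S'.card : ℝ) * ((S \ S').card : ℝ))} ρS) :
    mfp T a b + mfp T b a ≤ 3 * n * Real.log S.card / ρS :=
  stmt_16_general T hsym hnonneg hrow hprim a b S ha hb hsubconn ρS hρS
end
end

section
/- Let T be a symmetric nonnegative n×n matrix on node set N, and let S_{k+2} ⊆ S_{k+1} ⊆ S_k ⊆ N with S_{k+2} nonempty, S_{k+1} a proper subset of S_k, and S_{k+2} a proper subset of S_{k+1}. Suppose S_{k+1} attains the minimum ρ_k = inf_{S ⊂ S_k} |S_k| (Σ_{i∈S, j∈S_k∖S} T_ij)/(|S|·|S_k∖S|) over nonempty proper subsets S of S_k, and define ρ_{k+1} = |S_{k+1}| (Σ_{i∈S_{k+2}, j∈S_{k+1}∖S_{k+2}} T_ij)/(|S_{k+2}|·|S_{k+1}∖S_{k+2}|), with ρ_k > 0. If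 the cuts defined by S_{k+1} and S_{k+2} are disjoint with respect to S_k, i.e., δ(S_{k+1}) ∩ δ(S_{k+2}) = ∅ where δ(S) = { {i,j} : i ∈ S, j ∈ S_k∖S, T_ij > 0 }, then ρ_{k+1} > ρ_k. -/
noncomputable section

/-- the normalized cut value of the cut `(S, A∖S)` of the weighted graph on
node set `A` with edge weights `T`:
`|A| (Σ_{i∈S, j∈A∖S} T_ij)/(|S|·|A∖S|)`. -/
def cutVal {n : ℕ} (T : Fin n → Fin n → ℝ) (A S : Finset (Fin n)) : ℝ :=
  (A.card : ℝ) * (∑ i ∈ S, ∑ j ∈ A \ S, T i j) / ((S.card : ℝ) * ((A \ S).card : ℝ))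

/-- the cut `δ(S)` (relative to the ambient node set `A`): the unordered pairs
`{i,j}` with `i ∈ S`, `j ∈ A∖S` and positive weight contain `(i, j)` or `(j, i)`. -/
def inCut {n : ℕ} (T : Fin n → Fin n → ℝ) (A S : Finset (Fin n)) (i j : Fin n) : Prop :=
  0 < T i j ∧ ((i ∈ S ∧ j ∈ A \ S) ∨ (j ∈ S ∧ i ∈ A \ S))

/-- Theorem 13: successive normalized minimum cuts with disjoint cut edge sets
yield strictly increasing normalized cut values: if `S_{k+1}` attains the
minimum normalized cut value `ρ_k` of `S_k`, `S_{k+2} ⊂ S_{k+1} ⊂ S_k`, and the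
cuts defined by `S_{k+1}` and `S_{k+2}` are disjoint with respect to `S_k`,
then `ρ_{k+1} > ρ_k`. -/
theorem stmt_17 {n : ℕ}
    (T : Fin n → Fin n → ℝ)
    (hsym : ∀ i j, T i j = T j i)
    (hnonneg : ∀ i j, 0 ≤ T i j)
    (Sk Sk1 Sk2 : Finset (Fin n))
    (h21 : Sk2 ⊆ Sk1) (h1k : Sk1 ⊆ Sk)
    (h2ne : Sk2.Nonempty) (h1prop : Sk1 ⊂ Sk) (h2prop : Sk2 ⊂ Sk1)
    -- S_{k+1} attains the minimum normalized cut value ρ_k on S_k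
    (ρk : ℝ) (hρk_pos : 0 < ρk)
    (hρk_eq : ρk = cutVal T Sk Sk1)
    (hρk_min : ∀ S : Finset (Fin n), S.Nonempty → S ⊂ Sk → ρk ≤ cutVal T Sk S)
    -- ρ_{k+1} is the normalized cut value of the cut S_{k+2} of S_{k+1}
    (ρk1 : ℝ) (hρk1 : ρk1 = cutVal T Sk1 Sk2)
    -- the cuts defined by S_{k+1} and S_{k+2} are disjoint with respect to S_k
    (hdisj : ∀ i j : Fin n, ¬(inCut T Sk Sk1 i j ∧ inCut T Sk Sk2 i j)) :
    ρk < ρk1 := by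

  classical
  have hSk2Sk : Sk2 ⊆ Sk := h21.trans h1k
  -- edges from Sk2 to Sk \ Sk1 have zero weight (disjointness of cuts)
  have hzero : ∀ i ∈ Sk2, ∀ j ∈ Sk \ Sk1, T i j = 0 := by
    intro i hi j hj
    by_contra hne
    have hpos : 0 < T i j := lt_of_le_of_ne (hnonneg i j) (Ne.symm hne)
    have hj2 : j ∈ Sk \ Sk2 := by
      simp only [Finset.mem_sdiff] at hj ⊢
      exact ⟨hj.1, fun hjs => hj.2 (h21 hjs)⟩
    exact hdisj i j ⟨⟨hpos, Or.inl ⟨h21 hi, hj⟩⟩, ⟨hpos, Or.inl ⟨hi, hj2⟩⟩⟩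
  have hsplit : Sk \ Sk2 = (Sk1 \ Sk2) ∪ (Sk \ Sk1) := by
    ext x
    simp only [Finset.mem_sdiff, Finset.mem_union]
    constructor
    · rintro ⟨hx, hx2⟩
      by_cases h : x ∈ Sk1
      · exact Or.inl ⟨h, hx2⟩
      · exact Or.inr ⟨hx, h⟩
    · rintro (⟨hx1, hx2⟩ | ⟨hx1, hx2⟩)
      · exact ⟨h1k hx1, hx2⟩
      · exact ⟨hx1, fun hx => hx2 (h21 hx)⟩
  have hdisjU : Disjoint (Sk1 \ Sk2) (Sk \ Sk1) := by
    rw [Finset.disjoint_left]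
    intro x hx hx'
    simp only [Finset.mem_sdiff] at hx hx'
    exact hx'.2 hx.1
  set W := ∑ i ∈ Sk2, ∑ j ∈ Sk1 \ Sk2, T i j with hW
  have hsum : ∑ i ∈ Sk2, ∑ j ∈ Sk \ Sk2, T i j = W := by
    rw [hW]
    rw [hsplit]
    rw [Finset.sum_congr rfl (fun i hi => Finset.sum_union hdisjU)]
    rw [Finset.sum_add_distrib]
    have : ∑ i ∈ Sk2, ∑ j ∈ Sk \ Sk1, T i j = 0 :=
      Finset.sum_eq_zero fun i hi => Finset.sum_eq_zero fun j hj => hzero i hi j hj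
    rw [this, add_zero]
  -- cardinalities
  have hcpos : 0 < Sk2.card := Finset.card_pos.mpr h2ne
  have hcb : Sk2.card < Sk1.card := Finset.card_lt_card h2prop
  have hba : Sk1.card < Sk.card := Finset.card_lt_card h1prop
  have hcard1 : ((Sk \ Sk2).card : ℝ) = (Sk.card : ℝ) - (Sk2.card : ℝ) := by
    rw [Finset.card_sdiff_of_subset hSk2Sk, Nat.cast_sub (Finset.card_le_card hSk2Sk)]
  have hcard2 : ((Sk1 \ Sk2).card : ℝ) = (Sk1.card : ℝ) - (Sk2.card : ℝ) := by
    rw [Finset.card_sdiff_of_subset h21, Nat.cast_sub (Finset.card_le_card h21)]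
  set A := (Sk.card : ℝ) with hA
  set B := (Sk1.card : ℝ) with hB
  set C := (Sk2.card : ℝ) with hC
  have hC0 : (0:ℝ) < C := by rw [hC]; exact_mod_cast hcpos
  have hCB : C < B := by rw [hC, hB]; exact_mod_cast hcb
  have hBA : B < A := by rw [hB, hA]; exact_mod_cast hba
  have hD1 : (0:ℝ) < C * (A - C) := mul_pos hC0 (by linarith)
  have hD2 : (0:ℝ) < C * (B - C) := mul_pos hC0 (by linarith)
  have h1 : ρk ≤ A * W / (C * (A - C)) := by
    have hss : Sk2 ⊂ Sk := lt_of_lt_of_le h2prop h1k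
    have := hρk_min Sk2 h2ne hss
    unfold cutVal at this
    rwa [hsum, hcard1] at this
  have h2 : ρk1 = B * W / (C * (B - C)) := by
    rw [hρk1]
    unfold cutVal
    rw [hcard2]
  -- W > 0
  have hWnn : 0 ≤ W :=
    Finset.sum_nonneg fun i _ => Finset.sum_nonneg fun j _ => hnonneg i j
  have hWpos : 0 < W := by
    rcases lt_or_eq_of_le hWnn with h | h
    · exact h
    · exfalso
      rw [← h, mul_zero, zero_div] at h1
      linarith
  have hkey : A * W / (C * (A - C)) < B * W / (C * (B - C)) := by
    rw [div_lt_div_iff₀ hD1 hD2]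
    nlinarith [mul_pos (mul_pos hWpos hC0) (mul_pos hC0 (sub_pos.mpr hBA))]
  rw [h2]
  exact lt_of_le_of_lt h1 hkey
end
end
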